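/- arXiv:2601.11306 — 10 statements merged into one kernel-verified Lean document; each statement's English description precedes it below -/
import Mathlib

section
/- Let R be a commutative ring, ω ∈ R, and let p, t : ℕ → R be sequences such that p(k) = t(k) + ω Σ_{j=1}^{k−1} p(k−j) t(j) for every 1 ≤ k ≤ n. Then t(n) = (−1)^{n−1} · det M, where M is the n × n matrix with entries M(i,1) = p(i) for 1 ≤ i ≤ n, M(i, i+1) = 1 for 1 ≤ i ≤ n−1, M(i,j) = ω · p(i−j+1) for 2 ≤ j ≤ i, and M(i,j) = 0 whenever j > i+1. -/
/-!
The recurrence says that `(t 1, …, t n)` solves a unit lower-triangular linear system with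
right-hand side `(p 1, …, p n)`. By Cramer's rule `t n` is the determinant of the system matrix
with its last column replaced by `p`, and rotating the columns so that this column comes first
yields `M`; the rotation is an `n`-cycle, of sign `(-1) ^ (n - 1)`.
-/

open Finset Matrix

namespace Matrix

variable {n R : Type*} [Fintype n] [DecidableEq n] [CommRing R]

theorem cramer_mulVec (A : Matrix n n R) (x : n → R) : A.cramer (A *ᵥ x) = A.det • x := by
  rw [cramer_eq_adjugate_mulVec, mulVec_mulVec, adjugate_mul, smul_mulVec, one_mulVec]

theorem det_updateCol_mulVec (A : Matrix n n R) (x : n → R) (j : n) :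
    (A.updateCol j (A *ᵥ x)).det = A.det * x j := by
  rw [← cramer_apply, cramer_mulVec, Pi.smul_apply, smul_eq_mul]

theorem det_submatrix_finRotate {m : ℕ} (M : Matrix (Fin (m + 1)) (Fin (m + 1)) R) :
    (M.submatrix id (finRotate (m + 1))).det = (-1) ^ m * M.det := by
  rw [det_permute', sign_finRotate]
  simp

end Matrix

theorem Finset.sum_Icc_one_eq_sum_range {M : Type*} [AddCommMonoid M] (f : ℕ → M) (n : ℕ) :
    ∑ j ∈ Icc 1 n, f j = ∑ k ∈ range n, f (k + 1) := by
  rw [← Ico_add_one_right_eq_Icc, sum_Ico_eq_sum_range, Nat.add_sub_cancel]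
  simp only [add_comm 1]

theorem Fin.sum_Iio_eq_sum_range {M : Type*} [AddCommMonoid M] {n : ℕ} (f : ℕ → M) (i : Fin n) :
    ∑ j ∈ Iio i, f j = ∑ k ∈ range i, f k := by
  rw [← Nat.Iio_eq_range, ← Fin.map_valEmbedding_Iio, sum_map]
  rfl

section RecurrenceMatrix

variable {R : Type*} [CommRing R] (ω : R) (p : ℕ → R)

def recurrenceMatrix (n : ℕ) : Matrix (Fin n) (Fin n) R :=
  of fun i j => if j < i then ω * p (i - j) else if i = j then 1 else 0

theorem det_recurrenceMatrix (n : ℕ) : (recurrenceMatrix ω p n).det = 1 := by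
  rw [det_of_isLowerTriangular]
  · simp [recurrenceMatrix]
  · intro i j (hij : i < j)
    simp [recurrenceMatrix, hij.not_gt, hij.ne]

theorem recurrenceMatrix_mulVec_apply (t : ℕ → R) {n : ℕ} (i : Fin n) :
    (recurrenceMatrix ω p n *ᵥ fun j => t (j + 1)) i =
      t (i + 1) + ω * ∑ k ∈ range i, p (i - k) * t (k + 1) := by
  have hdiag (j : Fin n) : (¬j < i ∧ i = j) ↔ i = j := ⟨And.right, fun h => ⟨h ▸ lt_irrefl i, h⟩⟩
  simp only [mulVec, dotProduct, recurrenceMatrix, of_apply, ite_mul, sum_ite, filter_filter, hdiag,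
    one_mul, zero_mul, sum_const_zero, add_zero, filter_eq, mem_univ, if_true, sum_singleton,
    filter_gt_eq_Iio, mul_sum, mul_assoc]
  rw [add_comm, Fin.sum_Iio_eq_sum_range fun k => ω * (p (i - k) * t (k + 1))]

theorem recurrenceMatrix_mulVec {t : ℕ → R} {n : ℕ}
    (hpt : ∀ k, 1 ≤ k → k ≤ n → p k = t k + ω * ∑ j ∈ Icc 1 (k - 1), p (k - j) * t j) :
    (recurrenceMatrix ω p n *ᵥ fun i => t (i + 1)) = fun i : Fin n => p (i + 1) := by
  funext i
  rw [recurrenceMatrix_mulVec_apply, hpt (i + 1) (Nat.le_add_left 1 i) i.isLt, Nat.add_sub_cancel,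
    sum_Icc_one_eq_sum_range]
  simp only [Nat.add_sub_add_right]

theorem updateCol_recurrenceMatrix_last_eq_submatrix_finRotate {m : ℕ}
    (M : Matrix (Fin (m + 1)) (Fin (m + 1)) R)
    (hM1 : ∀ i j : Fin (m + 1), (j : ℕ) = 0 → M i j = p ((i : ℕ) + 1))
    (hM2 : ∀ i j : Fin (m + 1), (j : ℕ) = (i : ℕ) + 1 → M i j = 1)
    (hM3 : ∀ i j : Fin (m + 1), 1 ≤ (j : ℕ) → (j : ℕ) ≤ (i : ℕ) →
      M i j = ω * p ((i : ℕ) - (j : ℕ) + 1))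
    (hM4 : ∀ i j : Fin (m + 1), (i : ℕ) + 1 < (j : ℕ) → M i j = 0) :
    (recurrenceMatrix ω p (m + 1)).updateCol (Fin.last m) (fun i => p (i + 1)) =
      M.submatrix id (finRotate (m + 1)) := by
  ext i k
  rw [submatrix_apply, id_eq]
  by_cases hk : k = Fin.last m
  · subst hk
    rw [updateCol_self, hM1 i _ (by simp)]
  · have hrot : (finRotate (m + 1) k : ℕ) = k + 1 := coe_finRotate_of_ne_last hk
    rw [updateCol_ne hk, recurrenceMatrix, of_apply]
    rcases lt_trichotomy k i with hki | rfl | hik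
    · rw [if_pos hki, hM3 i _ (by omega) (by omega), hrot]
      congr 2
      omega
    · rw [if_neg (lt_irrefl k), if_pos rfl, hM2 k _ hrot]
    · rw [if_neg hik.not_gt, if_neg hik.ne, hM4 i _ (by omega)]

end RecurrenceMatrix

/-- The matrix `M` is indexed by `Fin n` (0-based): the 1-based entry `M(i,j)` of the
statement is `M ⟨i-1⟩ ⟨j-1⟩`. -/
theorem stmt_3 (R : Type*) [CommRing R] (ω : R) (p t : ℕ → R) (n : ℕ) (hn : 1 ≤ n)
    (hpt : ∀ k : ℕ, 1 ≤ k → k ≤ n →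
      p k = t k + ω * ∑ j ∈ Icc 1 (k - 1), p (k - j) * t j)
    (M : Matrix (Fin n) (Fin n) R)
    (hM1 : ∀ i : Fin n, ∀ j : Fin n, (j : ℕ) = 0 → M i j = p ((i : ℕ) + 1))
    (hM2 : ∀ i : Fin n, ∀ j : Fin n, (j : ℕ) = (i : ℕ) + 1 → M i j = 1)
    (hM3 : ∀ i : Fin n, ∀ j : Fin n, 1 ≤ (j : ℕ) → (j : ℕ) ≤ (i : ℕ) →
      M i j = ω * p ((i : ℕ) - (j : ℕ) + 1))
    (hM4 : ∀ i : Fin n, ∀ j : Fin n, (i : ℕ) + 1 < (j : ℕ) → M i j = 0) :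
    t n = (-1 : R) ^ (n - 1) * M.det := by
  obtain ⟨m, rfl⟩ := Nat.exists_eq_add_of_le' hn
  set A := recurrenceMatrix ω p (m + 1)
  calc t (m + 1) = (A.updateCol (Fin.last m) (A *ᵥ fun i => t (i + 1))).det := by
        rw [det_updateCol_mulVec, det_recurrenceMatrix, one_mul, Fin.val_last]
    _ = (M.submatrix id (finRotate (m + 1))).det := by
        rw [recurrenceMatrix_mulVec ω p hpt,
          updateCol_recurrenceMatrix_last_eq_submatrix_finRotate ω p M hM1 hM2 hM3 hM4]
    _ = (-1) ^ (m + 1 - 1) * M.det := by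
        rw [det_submatrix_finRotate, Nat.add_sub_cancel]
end

section
/- Let q ∈ ℂ with q ≠ 0 and q² ≠ 1, set ω = q − q⁻¹, let m ≥ 1 and let μ₁, …, μ_m ∈ ℂ be pairwise distinct. Define P(X) := ω⁻¹ · (∏_{i=1}^{m} (1 − q⁻² μ_i X) · (∏_{i=1}^{m} (1 − μ_i X))⁻¹ − 1) ∈ ℂ[[X]], where the inverse is taken in the ring of formal power series. Then for every n ≥ 1 the coefficient of Xⁿ in P(X) equals Σ_{i=1}^{m} μ_iⁿ d_i(μ), where d_i(μ) = q⁻¹ ∏_{j≠i} (μ_i − q⁻² μ_j)/(μ_i − μ_j). -/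
open Finset PowerSeries

/-! The numerator is a Lagrange interpolation problem: in the variable `Y = X⁻¹`, the
difference `∏ (Y - q⁻² μⱼ) - ∏ (Y - μⱼ)` has degree `< m` and takes the value
`(1 - q⁻²) μᵢ ∏_{j≠i} (μᵢ - q⁻² μⱼ)` at the node `μᵢ`. Reversing the variable turns the
interpolation formula into the partial fraction expansion
`∏ (1 - q⁻² μⱼ X) / ∏ (1 - μⱼ X) - 1 = Σᵢ cᵢ X / (1 - μᵢ X)`, whose coefficients are geometric,
and `ω⁻¹ (1 - q⁻²) = q⁻¹` gives the multiplicities. -/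

theorem prod_one_sub_mul_eq_pow_card_mul_prod {K ι : Type*} [Field K] (t : Finset ι) (w : ι → K)
    {x : K} (hx : x ≠ 0) :
    ∏ j ∈ t, (1 - w j * x) = x ^ #t * ∏ j ∈ t, (x⁻¹ - w j) := by
  rw [← prod_const, ← prod_mul_distrib]
  refine prod_congr rfl fun j _ => ?_
  field_simp

section PartialFractions

variable {K ι : Type*} [Field K] [DecidableEq ι] {s : Finset ι} {v : ι → K}

theorem prod_X_sub_C_mul_sub_prod_X_sub_C (hv : Set.InjOn v s) (a : K) :
    ∏ j ∈ s, (Polynomial.X - Polynomial.C (a * v j)) -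
        ∏ j ∈ s, (Polynomial.X - Polynomial.C (v j)) =
      ∑ i ∈ s, Polynomial.C ((1 - a) * v i * ∏ j ∈ s.erase i, (v i - a * v j) / (v i - v j)) *
        ∏ j ∈ s.erase i, (Polynomial.X - Polynomial.C (v j)) := by
  have hdeg : (∏ j ∈ s, (Polynomial.X - Polynomial.C (a * v j)) -
      ∏ j ∈ s, (Polynomial.X - Polynomial.C (v j))).degree < (#s : WithBot ℕ) := by
    have h := Polynomial.degree_sub_lt_left (p := Lagrange.nodal s fun j => a * v j)
      (q := Lagrange.nodal s v) (by rw [Lagrange.degree_nodal, Lagrange.degree_nodal])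
      Lagrange.nodal_ne_zero
      (by rw [Lagrange.nodal_monic.leadingCoeff, Lagrange.nodal_monic.leadingCoeff])
    rwa [Lagrange.degree_nodal] at h
  rw [Lagrange.eq_interpolate hv hdeg, Lagrange.interpolate_eq_sum]
  refine sum_congr rfl fun i hi => ?_
  simp only [Polynomial.eval_sub, Polynomial.eval_prod, Polynomial.eval_X, Polynomial.eval_C]
  rw [prod_eq_zero (f := fun j => v i - v j) hi (sub_self _), sub_zero,
    ← mul_prod_erase s (fun j => v i - a * v j) hi, prod_div_distrib]
  congr 2
  ring

theorem prod_one_sub_C_mul_X_mul_sub_prod_one_sub_C_mul_X [Infinite K] (hv : Set.InjOn v s)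
    (a : K) :
    ∏ j ∈ s, (1 - Polynomial.C (a * v j) * Polynomial.X) -
        ∏ j ∈ s, (1 - Polynomial.C (v j) * Polynomial.X) =
      ∑ i ∈ s, Polynomial.C ((1 - a) * v i * ∏ j ∈ s.erase i, (v i - a * v j) / (v i - v j)) *
        Polynomial.X * ∏ j ∈ s.erase i, (1 - Polynomial.C (v j) * Polynomial.X) := by
  refine Polynomial.funext fun x => ?_
  obtain rfl | hx := eq_or_ne x 0
  · simp [Polynomial.eval_prod, Polynomial.eval_finsetSum]
  have h := congrArg (fun p => x ^ #s * p.eval x⁻¹) (prod_X_sub_C_mul_sub_prod_X_sub_C hv a)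
  simp only [Polynomial.eval_sub, Polynomial.eval_prod, Polynomial.eval_finsetSum,
    Polynomial.eval_mul, Polynomial.eval_X, Polynomial.eval_C, mul_sub, mul_sum] at h
  simp only [Polynomial.eval_sub, Polynomial.eval_prod, Polynomial.eval_finsetSum,
    Polynomial.eval_mul, Polynomial.eval_X, Polynomial.eval_C, Polynomial.eval_one,
    prod_one_sub_mul_eq_pow_card_mul_prod _ _ hx, h]
  refine sum_congr rfl fun i hi => ?_
  rw [← card_erase_add_one hi, pow_succ]
  ring

theorem PowerSeries.coeff_inv_one_sub_C_mul_X (c : K) (n : ℕ) :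
    coeff n (1 - C c * X)⁻¹ = c ^ n := by
  have h : rescale c (mk 1) = (1 - C c * X)⁻¹ := by
    rw [eq_inv_iff_mul_eq_one (by simp), ← rescale_X, ← map_one (rescale c), ← map_sub, ← map_mul,
      mk_one_mul_one_sub_eq_one, map_one]
  rw [← h, coeff_rescale, coeff_mk, Pi.one_apply, mul_one]

theorem PowerSeries.prod_one_sub_C_mul_X_mul_inv_sub_one [Infinite K] (hv : Set.InjOn v s)
    (a : K) :
    (∏ j ∈ s, (1 - C (a * v j) * X)) * (∏ j ∈ s, (1 - C (v j) * X))⁻¹ - 1 =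
      ∑ i ∈ s, C ((1 - a) * v i * ∏ j ∈ s.erase i, (v i - a * v j) / (v i - v j)) * X *
        (1 - C (v i) * X)⁻¹ := by
  have hunit (t : Finset ι) : constantCoeff (∏ j ∈ t, (1 - C (v j) * X)) ≠ 0 := by simp
  have hpoly := congrArg Polynomial.coeToPowerSeries.ringHom
    (prod_one_sub_C_mul_X_mul_sub_prod_one_sub_C_mul_X hv a)
  simp only [map_sub Polynomial.coeToPowerSeries.ringHom,
    map_sum Polynomial.coeToPowerSeries.ringHom, map_prod Polynomial.coeToPowerSeries.ringHom,
    map_mul Polynomial.coeToPowerSeries.ringHom,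
    map_one, Polynomial.coeToPowerSeries.ringHom_apply, Polynomial.coe_C, Polynomial.coe_X] at hpoly
  have mul_inv_sub_one (A B : K⟦X⟧) (hB : constantCoeff B ≠ 0) : A * B⁻¹ - 1 = (A - B) * B⁻¹ := by
    rw [sub_mul, PowerSeries.mul_inv_cancel B hB]
  rw [mul_inv_sub_one _ _ (hunit s), hpoly, sum_mul]
  refine sum_congr rfl fun i hi => ?_
  rw [← mul_prod_erase s _ hi, PowerSeries.mul_inv_rev, mul_assoc,
    ← mul_assoc _ _ (1 - C (v i) * X)⁻¹, PowerSeries.mul_inv_cancel _ (hunit _), one_mul]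

theorem PowerSeries.coeff_succ_prod_one_sub_C_mul_X_mul_inv_sub_one [Infinite K]
    (hv : Set.InjOn v s) (a : K) (n : ℕ) :
    coeff (n + 1) ((∏ j ∈ s, (1 - C (a * v j) * X)) * (∏ j ∈ s, (1 - C (v j) * X))⁻¹ - 1) =
      ∑ i ∈ s, (1 - a) * v i ^ (n + 1) * ∏ j ∈ s.erase i, (v i - a * v j) / (v i - v j) := by
  rw [prod_one_sub_C_mul_X_mul_inv_sub_one hv a, map_sum]
  refine sum_congr rfl fun i _ => ?_
  rw [mul_assoc, coeff_C_mul, coeff_succ_X_mul, coeff_inv_one_sub_C_mul_X]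
  ring

end PartialFractions

theorem inv_sub_inv_mul_one_sub_inv_sq {K : Type*} [Field K] {q : K} (hq : q ^ 2 ≠ 1) :
    (q - q⁻¹)⁻¹ * (1 - q⁻¹ ^ 2) = q⁻¹ := by
  obtain rfl | hq0 := eq_or_ne q 0
  · simp
  have hq_sub : q - q⁻¹ ≠ 0 := by
    rw [sub_ne_zero]
    contrapose! hq
    field_simp at hq
    linear_combination hq
  field_simp

theorem stmt_6_general (q : ℂ) (hq2 : q ^ 2 ≠ 1) (ω : ℂ) (hω : ω = q - q⁻¹)
    (m : ℕ) (μ : Fin m → ℂ) (hμ : Function.Injective μ)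
    (P : PowerSeries ℂ)
    (hP : P = C ω⁻¹ *
      ((∏ i, (1 - C (q⁻¹ ^ 2 * μ i) * X)) * (∏ i, (1 - C (μ i) * X))⁻¹ - 1)) :
    ∀ n : ℕ, 1 ≤ n →
      coeff n P = ∑ i, μ i ^ n *
        (q⁻¹ * ∏ j ∈ univ.erase i, (μ i - q⁻¹ ^ 2 * μ j) / (μ i - μ j)) := by
  intro n hn
  obtain ⟨n, rfl⟩ := Nat.exists_eq_add_of_le' hn
  rw [hP, coeff_C_mul, coeff_succ_prod_one_sub_C_mul_X_mul_inv_sub_one hμ.injOn, mul_sum]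
  refine sum_congr rfl fun i _ => ?_
  have hω_mul : ω⁻¹ * (1 - q⁻¹ ^ 2) = q⁻¹ := hω ▸ inv_sub_inv_mul_one_sub_inv_sq hq2
  linear_combination
    (μ i ^ (n + 1) * ∏ j ∈ univ.erase i, (μ i - q⁻¹ ^ 2 * μ j) / (μ i - μ j)) * hω_mul

/-- spectral parameterization of the power sums of the first kind:
the `n`-th coefficient of `P(X) = ω⁻¹·(∏(1−q⁻²μᵢX)·(∏(1−μᵢX))⁻¹ − 1)` equals
`Σᵢ μᵢⁿ dᵢ(μ)` with `dᵢ(μ) = q⁻¹ ∏_{j≠i} (μᵢ − q⁻²μⱼ)/(μᵢ − μⱼ)`. -/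
theorem stmt_6 (q : ℂ) (hq : q ≠ 0) (hq2 : q ^ 2 ≠ 1) (ω : ℂ) (hω : ω = q - q⁻¹)
    (m : ℕ) (hm : 1 ≤ m) (μ : Fin m → ℂ) (hμ : Function.Injective μ)
    (P : PowerSeries ℂ)
    (hP : P = C ω⁻¹ *
      ((∏ i, (1 - C (q⁻¹ ^ 2 * μ i) * X)) * (∏ i, (1 - C (μ i) * X))⁻¹ - 1)) :
    ∀ n : ℕ, 1 ≤ n →
      coeff n P = ∑ i, μ i ^ n *
        (q⁻¹ * ∏ j ∈ univ.erase i, (μ i - q⁻¹ ^ 2 * μ j) / (μ i - μ j)) :=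
  stmt_6_general q hq2 ω hω m μ hμ P hP
end

section
/- Let q ∈ ℂ with q ≠ 0 and q² ≠ 1, set ω = q − q⁻¹, let m ≥ 1 and let μ₁, …, μ_m ∈ ℂ be pairwise distinct. Define T(X) := −ω⁻¹ · (∏_{i=1}^{m} (1 − μ_i X) · (∏_{i=1}^{m} (1 − q⁻² μ_i X))⁻¹ − 1) ∈ ℂ[[X]], where the inverse is taken in the ring of formal power series. Then for every n ≥ 1 the coefficient of Xⁿ in T(X) equals Σ_{i=1}^{m} (q⁻² μ_i)ⁿ d̃_i(μ), where d̃_i(μ) = q ∏_{j≠i} (μ_i − q² μ_j)/(μ_i − μ_j). -/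
/-!
Put `ν i = q⁻² μ i`. The two monic polynomials `∏ (Y - μ i)` and `∏ (Y - ν i)` differ by a
polynomial of degree `< m`, so Lagrange interpolation at the distinct nodes `ν i` gives the partial
fraction decomposition `∏ (Y - μ j) / ∏ (Y - ν j) = 1 + ∑ rᵢ / (Y - ν i)` with residues
`rᵢ = ∏ⱼ (ν i - μ j) / ∏_{j ≠ i} (ν i - ν j)`. Substituting `Y = X⁻¹` turns it into
`∏ (1 - μ j X) / ∏ (1 - ν j X) = 1 + ∑ rᵢ X / (1 - ν i X)`, whose coefficient of `Xⁿ⁺¹` is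
`∑ rᵢ (ν i)ⁿ`; finally `rᵢ = -ω (ν i) d̃ᵢ(μ)`.
-/

open Finset PowerSeries

namespace Lagrange

variable {K : Type*} [Field K] {ι : Type*}

theorem prod_one_sub_mul_eq_pow_mul_eval_nodal (s : Finset ι) (a : ι → K) {x : K} (hx : x ≠ 0) :
    ∏ i ∈ s, (1 - a i * x) = x ^ #s * (nodal s a).eval x⁻¹ := by
  rw [eval_nodal, ← prod_const, ← prod_mul_distrib]
  refine prod_congr rfl fun i _ => ?_
  field_simp

variable [DecidableEq ι] {s : Finset ι} {ν : ι → K}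

/-- The residue of `nodal s μ / nodal s ν` at its pole `ν i`. -/
noncomputable def nodalResidue (s : Finset ι) (μ ν : ι → K) (i : ι) : K :=
  (nodal s μ).eval (ν i) * nodalWeight s ν i

theorem nodal_sub_nodal_eq_sum (μ : ι → K) (hν : Set.InjOn ν s) :
    nodal s μ - nodal s ν =
      ∑ i ∈ s, Polynomial.C (nodalResidue s μ ν i) * nodal (s.erase i) ν := by
  have hdeg : (nodal s μ - nodal s ν).degree < #s := by
    rw [← degree_nodal (v := μ)]
    exact Polynomial.degree_sub_lt_left (by rw [degree_nodal, degree_nodal]) nodal_ne_zero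
      (by rw [nodal_monic.leadingCoeff, nodal_monic.leadingCoeff])
  rw [eq_interpolate hν hdeg, interpolate_apply]
  refine sum_congr rfl fun i hi => ?_
  rw [basis_eq_prod_sub_inv_mul_nodal_div hi, ← nodal_erase_eq_nodal_div hi, Polynomial.eval_sub,
    eval_nodal_at_node hi, sub_zero, ← mul_assoc, ← Polynomial.C_mul, nodalResidue]

theorem prod_one_sub_mul_sub_prod_one_sub_mul (μ : ι → K) (hν : Set.InjOn ν s) (x : K) :
    ∏ i ∈ s, (1 - μ i * x) - ∏ i ∈ s, (1 - ν i * x) =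
      ∑ i ∈ s, nodalResidue s μ ν i * x * ∏ j ∈ s.erase i, (1 - ν j * x) := by
  rcases eq_or_ne x 0 with rfl | hx
  · simp
  have h := congrArg (Polynomial.eval x⁻¹) (nodal_sub_nodal_eq_sum μ hν)
  simp only [Polynomial.eval_sub, Polynomial.eval_finsetSum, Polynomial.eval_mul,
    Polynomial.eval_C] at h
  simp only [prod_one_sub_mul_eq_pow_mul_eval_nodal _ _ hx, ← mul_sub, h, mul_sum]
  refine sum_congr rfl fun i hi => ?_
  rw [← card_erase_add_one hi, pow_succ]
  field_simp

theorem nodalResidue_inv_sq_mul {q : K} (hq : q ≠ 0) (μ : ι → K) {i : ι} (hi : i ∈ s) :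
    nodalResidue s μ (fun j => q⁻¹ ^ 2 * μ j) i =
      -(q - q⁻¹) * (q⁻¹ ^ 2 * μ i) * (q * ∏ j ∈ s.erase i, (μ i - q ^ 2 * μ j) / (μ i - μ j)) := by
  have hfactor : ∀ j, (q⁻¹ ^ 2 * μ i - μ j) * (q⁻¹ ^ 2 * μ i - q⁻¹ ^ 2 * μ j)⁻¹ =
      (μ i - q ^ 2 * μ j) / (μ i - μ j) := by
    intro j
    rw [← mul_sub, mul_inv, div_eq_mul_inv, ← mul_assoc]
    congr 1
    field_simp
  rw [nodalResidue, eval_nodal, nodalWeight, ← mul_prod_erase s _ hi, mul_assoc,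
    ← prod_mul_distrib, prod_congr rfl fun j _ => hfactor j]
  field_simp
  ring

end Lagrange

namespace PowerSeries

open Lagrange

variable {K : Type*} [Field K] {ι : Type*} [DecidableEq ι] {s : Finset ι} {ν : ι → K}

theorem coeff_inv_one_sub_C_mul_X_s7 (a : K) (n : ℕ) : coeff n (1 - C a * X)⁻¹ = a ^ n := by
  have h : (1 - C a * X)⁻¹ = rescale a (mk 1) := by
    rw [inv_eq_iff_mul_eq_one (by simp), ← rescale_X, ← map_one (rescale a), ← map_sub,
      ← map_mul, mk_one_mul_one_sub_eq_one, map_one]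
  simp [h]

theorem prod_one_sub_C_mul_X_sub_prod_eq_sum [Infinite K] (μ : ι → K) (hν : Set.InjOn ν s) :
    ∏ i ∈ s, (1 - C (μ i) * X) - ∏ i ∈ s, (1 - C (ν i) * X) =
      ∑ i ∈ s, C (nodalResidue s μ ν i) * X * ∏ j ∈ s.erase i, (1 - C (ν j) * X) := by
  have hpoly : ∏ i ∈ s, (1 - Polynomial.C (μ i) * Polynomial.X)
      - ∏ i ∈ s, (1 - Polynomial.C (ν i) * Polynomial.X) =
      ∑ i ∈ s, Polynomial.C (nodalResidue s μ ν i) * Polynomial.X *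
        ∏ j ∈ s.erase i, (1 - Polynomial.C (ν j) * Polynomial.X) := by
    refine Polynomial.funext fun x => ?_
    simpa [Polynomial.eval_prod, Polynomial.eval_finsetSum]
      using prod_one_sub_mul_sub_prod_one_sub_mul μ hν x
  simpa only [map_sub, map_sum, map_mul, map_prod, map_one,
    Polynomial.coeToPowerSeries.ringHom_apply, Polynomial.coe_C, Polynomial.coe_X]
    using congrArg Polynomial.coeToPowerSeries.ringHom hpoly

theorem prod_mul_inv_prod_eq_one_add_sum [Infinite K] (μ : ι → K) (hν : Set.InjOn ν s) :
    (∏ i ∈ s, (1 - C (μ i) * X)) * (∏ i ∈ s, (1 - C (ν i) * X))⁻¹ =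
      1 + ∑ i ∈ s, C (nodalResidue s μ ν i) * X * (1 - C (ν i) * X)⁻¹ := by
  have hD : constantCoeff (∏ i ∈ s, (1 - C (ν i) * X)) ≠ 0 := by simp [map_prod]
  refine ((eq_mul_inv_iff_mul_eq hD).2 ?_).symm
  calc (1 + ∑ i ∈ s, C (nodalResidue s μ ν i) * X * (1 - C (ν i) * X)⁻¹) *
        ∏ i ∈ s, (1 - C (ν i) * X)
      = ∏ i ∈ s, (1 - C (ν i) * X) +
          ∑ i ∈ s, C (nodalResidue s μ ν i) * X * ∏ j ∈ s.erase i, (1 - C (ν j) * X) := by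
        rw [add_mul, one_mul, sum_mul]
        congr 1
        refine sum_congr rfl fun i hi => ?_
        rw [← mul_prod_erase s _ hi, mul_assoc, ← mul_assoc _ (1 - C (ν i) * X),
          PowerSeries.inv_mul_cancel _ (by simp), one_mul]
    _ = ∏ i ∈ s, (1 - C (μ i) * X) := by
        rw [← prod_one_sub_C_mul_X_sub_prod_eq_sum μ hν, add_sub_cancel]

end PowerSeries

theorem stmt_7_general (q : ℂ) (hq : q ≠ 0) (hq2 : q ^ 2 ≠ 1) (ω : ℂ) (hω : ω = q - q⁻¹)
    (m : ℕ) (μ : Fin m → ℂ) (hμ : Function.Injective μ)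
    (T : PowerSeries ℂ)
    (hT : T = -C ω⁻¹ *
      ((∏ i, (1 - C (μ i) * X)) * (∏ i, (1 - C (q⁻¹ ^ 2 * μ i) * X))⁻¹ - 1)) :
    ∀ n : ℕ, 1 ≤ n →
      coeff n T = ∑ i, (q⁻¹ ^ 2 * μ i) ^ n *
        (q * ∏ j ∈ univ.erase i, (μ i - q ^ 2 * μ j) / (μ i - μ j)) := by
  intro n hn
  obtain ⟨k, rfl⟩ := Nat.exists_eq_add_of_le' hn
  have hω0 : ω ≠ 0 := by
    rw [hω, sub_ne_zero]
    contrapose! hq2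
    field_simp at hq2
    linear_combination hq2
  have hν : Set.InjOn (fun i => q⁻¹ ^ 2 * μ i) (univ : Finset (Fin m)) :=
    ((mul_right_injective₀ (by simpa)).comp hμ).injOn
  rw [hT, prod_mul_inv_prod_eq_one_add_sum μ hν, add_sub_cancel_left, mul_sum, map_sum]
  refine sum_congr rfl fun i _ => ?_
  simp only [neg_mul, map_neg, mul_assoc, coeff_C_mul, coeff_succ_X_mul, coeff_inv_one_sub_C_mul_X_s7]
  rw [Lagrange.nodalResidue_inv_sq_mul hq μ (mem_univ i), ← hω]
  generalize q * ∏ j ∈ univ.erase i, (μ i - q ^ 2 * μ j) / (μ i - μ j) = d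
  generalize q⁻¹ ^ 2 * μ i = ν
  field_simp
  ring

/-- spectral parameterization of the power sums of the second kind:
the `n`-th coefficient of `T(X) = −ω⁻¹·(∏(1−μᵢX)·(∏(1−q⁻²μᵢX))⁻¹ − 1)` equals
`Σᵢ (q⁻²μᵢ)ⁿ d̃ᵢ(μ)` with `d̃ᵢ(μ) = q ∏_{j≠i} (μᵢ − q²μⱼ)/(μᵢ − μⱼ)`. -/
theorem stmt_7 (q : ℂ) (hq : q ≠ 0) (hq2 : q ^ 2 ≠ 1) (ω : ℂ) (hω : ω = q - q⁻¹)
    (m : ℕ) (hm : 1 ≤ m) (μ : Fin m → ℂ) (hμ : Function.Injective μ)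
    (T : PowerSeries ℂ)
    (hT : T = -C ω⁻¹ *
      ((∏ i, (1 - C (μ i) * X)) * (∏ i, (1 - C (q⁻¹ ^ 2 * μ i) * X))⁻¹ - 1)) :
    ∀ n : ℕ, 1 ≤ n →
      coeff n T = ∑ i, (q⁻¹ ^ 2 * μ i) ^ n *
        (q * ∏ j ∈ univ.erase i, (μ i - q ^ 2 * μ j) / (μ i - μ j)) :=
  stmt_7_general q hq hq2 ω hω m μ hμ T hT
end

section
/- Let q ∈ ℂ with q ≠ 0 and q² ≠ 1, set ω = q − q⁻¹, let m ≥ 1 and let μ₁, …, μ_m ∈ ℂ be pairwise distinct. Define p_n(μ) = Σ_{i=1}^{m} μ_iⁿ d_i(μ) and t_n(μ) = Σ_{i=1}^{m} (q⁻² μ_i)ⁿ d̃_i(μ). Then for every n ≥ 1: p_n(μ) = t_n(μ) + ω Σ_{k=1}^{n−1} p_{n−k}(μ) · t_k(μ). -/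
/-!
Let `c = q⁻²`. Lagrange interpolation at the nodes `μ_i` gives the partial fraction expansion
`∏ⱼ (1 - c μⱼ X) / (1 - μⱼ X) = 1 + Σᵢ (1 - c) μᵢ wᵢ X / (1 - μᵢ X)` with
`wᵢ = ∏_{j ≠ i} (μᵢ - c μⱼ) / (μᵢ - μⱼ)`, i.e. this product is `1 + ω Σ_{n ≥ 1} pₙ Xⁿ`.
Its reciprocal is the same kind of product for the nodes `q⁻² μᵢ` and the factor `q²`, whose
expansion is `1 - ω Σ_{n ≥ 1} tₙ Xⁿ`. Comparing coefficients in the product of the two series,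
which is `1`, gives the recursion.
-/

open Finset

namespace Polynomial

theorem reflect_sum {R ι : Type*} [Semiring R] (N : ℕ) (s : Finset ι) (f : ι → R[X]) :
    (∑ i ∈ s, f i).reflect N = ∑ i ∈ s, (f i).reflect N :=
  map_sum (⟨⟨reflect N, reflect_zero⟩, fun f g => reflect_add f g N⟩ : R[X] →+ R[X]) f s

end Polynomial

namespace Lagrange

open Polynomial

variable {R ι : Type*} [CommRing R] [Nontrivial R] [DecidableEq ι]

theorem reflect_nodal (s : Finset ι) (v : ι → R) :
    (nodal s v).reflect #s = ∏ j ∈ s, (1 - C (v j) * X) := by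
  induction s using Finset.induction_on with
  | empty => simp [nodal_empty]
  | insert a s ha ih =>
    rw [nodal_insert_eq_nodal ha, card_insert_of_notMem ha, prod_insert ha, add_comm,
      reflect_mul _ _ (natDegree_X_sub_C_le _) natDegree_nodal.le, ih, reflect_sub,
      reflect_one_X, reflect_C, pow_one]

theorem reflect_C_mul_nodal_erase {s : Finset ι} {i : ι} (hi : i ∈ s) (a : R) (v : ι → R) :
    (C a * nodal (s.erase i) v).reflect #s = C a * X * ∏ j ∈ s.erase i, (1 - C (v j) * X) := by
  rw [← card_erase_add_one hi, add_comm,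
    reflect_mul _ _ ((natDegree_C a).trans_le zero_le_one) natDegree_nodal.le, reflect_nodal,
    reflect_C, pow_one]

end Lagrange

namespace Finset

theorem sum_Icc_eq_sum_antidiagonal {M : Type*} [AddCommMonoid M] (f : ℕ → ℕ → M) (n : ℕ) :
    ∑ k ∈ Icc 1 (n + 1), f (n + 2 - k) k = ∑ x ∈ antidiagonal n, f (x.1 + 1) (x.2 + 1) := by
  refine sum_nbij' (fun k => (n + 1 - k, k - 1)) (fun x => x.2 + 1) ?_ ?_ ?_ ?_ ?_ <;>
    intro x hx <;>
    simp only [mem_Icc, HasAntidiagonal.mem_antidiagonal, Prod.ext_iff] at hx ⊢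
  all_goals try omega
  congr 1 <;> omega

end Finset

namespace DilationSeries

variable {K ι : Type*} [Field K]

section PowerSeries

open PowerSeries

theorem one_sub_C_mul_X_mul_mk_pow (a : K) : (1 - C a * X) * PowerSeries.mk (a ^ ·) = 1 := by
  have h := congrArg (rescale a) (mk_one_mul_one_sub_eq_one (S := K))
  simpa only [map_mul, rescale_mk, Pi.one_apply, mul_one, map_sub, map_one, rescale_X,
    mul_comm (PowerSeries.mk _)] using h

theorem prod_one_sub_C_mul_X_mul_prod_mk_pow (s : Finset ι) (v : ι → K) :
    (∏ j ∈ s, (1 - C (v j) * X)) * ∏ j ∈ s, PowerSeries.mk (v j ^ ·) = 1 := by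
  rw [← prod_mul_distrib]
  exact prod_eq_one fun j _ => one_sub_C_mul_X_mul_mk_pow (v j)

noncomputable def dilationSeries (s : Finset ι) (c : K) (v : ι → K) : K⟦X⟧ :=
  (∏ j ∈ s, (1 - C (c * v j) * X)) * ∏ j ∈ s, PowerSeries.mk (v j ^ ·)

theorem dilationSeries_mul_dilationSeries_inv (s : Finset ι) {c : K} (hc : c ≠ 0) (v : ι → K) :
    dilationSeries s c v * dilationSeries s c⁻¹ (fun j => c * v j) = 1 := by
  simp only [dilationSeries, inv_mul_cancel_left₀ hc]
  calc _ = ((∏ j ∈ s, (1 - C (v j) * X)) * ∏ j ∈ s, PowerSeries.mk (v j ^ ·)) *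
        ((∏ j ∈ s, (1 - C (c * v j) * X)) * ∏ j ∈ s, PowerSeries.mk ((c * v j) ^ ·)) := by
        ring
    _ = 1 := by
      rw [prod_one_sub_C_mul_X_mul_prod_mk_pow, prod_one_sub_C_mul_X_mul_prod_mk_pow, one_mul]

theorem eq_add_mul_sum_Icc_of_mul_eq_one {a b : ℕ → K} {ω : K} (hω : ω ≠ 0)
    (h : (1 + X * PowerSeries.mk fun n => ω * a (n + 1)) *
      (1 + X * PowerSeries.mk fun n => -(ω * b (n + 1))) = 1) :
    ∀ n, 1 ≤ n → a n = b n + ω * ∑ k ∈ Icc 1 (n - 1), a (n - k) * b k := by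
  set A := PowerSeries.mk fun n => a (n + 1)
  set B := PowerSeries.mk fun n => b (n + 1)
  have hA : (PowerSeries.mk fun n => ω * a (n + 1)) = C ω * A := by ext; simp [A]
  have hB : (PowerSeries.mk fun n => -(ω * b (n + 1))) = -(C ω * B) := by ext; simp [B]
  have hAB : A - B = C ω * X * (A * B) := by
    have hωX : C ω * X ≠ 0 := mul_ne_zero (by simpa using hω) X_ne_zero
    rw [hA, hB] at h
    refine sub_eq_zero.mp ((mul_eq_zero.mp ?_).resolve_left hωX)
    linear_combination h
  rintro (_ | _ | n) hn
  · omega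
  · simpa [A, B, sub_eq_zero] using congrArg (coeff 0) hAB
  · have h_coeff := congrArg (coeff (n + 1)) hAB
    rw [map_sub, mul_assoc, coeff_C_mul, coeff_succ_X_mul, coeff_mul] at h_coeff
    simp only [coeff_mk, A, B] at h_coeff
    rw [show n + 1 + 1 - 1 = n + 1 by omega, sum_Icc_eq_sum_antidiagonal (fun i k => a i * b k)]
    linear_combination h_coeff

end PowerSeries

variable [DecidableEq ι]

/-- In the paper's notation, `dilationWeight univ (q⁻¹ ^ 2) μ i = q d_i(μ)` and
`dilationWeight univ (q ^ 2) μ i = q⁻¹ d̃_i(μ)`. -/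
def dilationWeight (s : Finset ι) (c : K) (v : ι → K) (i : ι) : K :=
  ∏ j ∈ s.erase i, (v i - c * v j) / (v i - v j)

theorem dilationWeight_const_mul (s : Finset ι) (c : K) (v : ι → K) (i : ι) {a : K}
    (ha : a ≠ 0) : dilationWeight s c (fun j => a * v j) i = dilationWeight s c v i := by
  refine prod_congr rfl fun j _ => ?_
  rw [show a * v i - c * (a * v j) = a * (v i - c * v j) by ring, ← mul_sub,
    mul_div_mul_left _ _ ha]

section Polynomial

open Polynomial Lagrange

theorem nodal_const_mul {s : Finset ι} {v : ι → K} (hv : Set.InjOn v s) (c : K) :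
    nodal s (fun j => c * v j) = nodal s v +
      ∑ i ∈ s, C ((1 - c) * v i * dilationWeight s c v i) * nodal (s.erase i) v := by
  have hdeg : (nodal s (fun j => c * v j) - nodal s v).degree < #s := by
    rw [← degree_nodal (v := fun j => c * v j)]
    exact degree_sub_lt_left (by rw [degree_nodal, degree_nodal]) nodal_monic.ne_zero
      (by rw [nodal_monic.leadingCoeff, nodal_monic.leadingCoeff])
  rw [← sub_eq_iff_eq_add', eq_interpolate hv hdeg, interpolate_apply]
  refine sum_congr rfl fun i hi => ?_
  rw [basis_eq_prod_sub_inv_mul_nodal_div hi, ← nodal_erase_eq_nodal_div hi, ← mul_assoc, ← C_mul,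
    eval_sub, eval_nodal_at_node hi, sub_zero, eval_nodal, nodalWeight, dilationWeight,
    ← mul_prod_erase s _ hi, prod_div_distrib, prod_inv_distrib]
  congr 2
  ring

theorem prod_one_sub_C_const_mul_mul_X {s : Finset ι} {v : ι → K} (hv : Set.InjOn v s) (c : K) :
    ∏ j ∈ s, (1 - C (c * v j) * X) = ∏ j ∈ s, (1 - C (v j) * X) +
      ∑ i ∈ s, C ((1 - c) * v i * dilationWeight s c v i) * X *
        ∏ j ∈ s.erase i, (1 - C (v j) * X) := by
  have h := congrArg (reflect #s) (nodal_const_mul hv c)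
  rwa [reflect_add, reflect_sum, reflect_nodal, reflect_nodal,
    sum_congr rfl fun i hi => reflect_C_mul_nodal_erase hi _ v] at h

end Polynomial

open PowerSeries in
theorem dilationSeries_eq {s : Finset ι} {v : ι → K} (hv : Set.InjOn v s) (c : K) :
    dilationSeries s c v = 1 + X * PowerSeries.mk fun n =>
      ∑ i ∈ s, v i ^ (n + 1) * ((1 - c) * dilationWeight s c v i) := by
  set toSeries : Polynomial K →+* K⟦X⟧ := Polynomial.coeToPowerSeries.ringHom
  have h := congrArg toSeries (prod_one_sub_C_const_mul_mul_X hv c)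
  simp only [map_prod toSeries, map_add toSeries, map_sum toSeries, map_mul toSeries,
    map_sub toSeries, map_one toSeries, toSeries, Polynomial.coeToPowerSeries.ringHom_apply,
    Polynomial.coe_C, Polynomial.coe_X] at h
  have hterm : ∀ i ∈ s, C ((1 - c) * v i * dilationWeight s c v i) * X *
      (∏ j ∈ s.erase i, (1 - C (v j) * X)) * ∏ j ∈ s, PowerSeries.mk (v j ^ ·) =
      X * (C ((1 - c) * v i * dilationWeight s c v i) * PowerSeries.mk (v i ^ ·)) := by
    intro i hi
    rw [← mul_prod_erase s _ hi]
    calc _ = X * (C ((1 - c) * v i * dilationWeight s c v i) * PowerSeries.mk (v i ^ ·)) *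
          ((∏ j ∈ s.erase i, (1 - C (v j) * X)) *
            ∏ j ∈ s.erase i, PowerSeries.mk (v j ^ ·)) := by ring
      _ = _ := by rw [prod_one_sub_C_mul_X_mul_prod_mk_pow, mul_one]
  rw [dilationSeries, h, add_mul, prod_one_sub_C_mul_X_mul_prod_mk_pow, sum_mul,
    sum_congr rfl hterm, ← mul_sum]
  congr 2
  ext n
  simp only [map_sum, coeff_C_mul, coeff_mk]
  exact sum_congr rfl fun i _ => by ring

end DilationSeries

open DilationSeries

theorem stmt_8_general (q : ℂ) (hq : q ≠ 0) (hq2 : q ^ 2 ≠ 1) (ω : ℂ) (hω : ω = q - q⁻¹)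
    (m : ℕ) (μ : Fin m → ℂ) (hμ : Function.Injective μ)
    (p t : ℕ → ℂ)
    (hp : ∀ n : ℕ, p n = ∑ i, μ i ^ n *
      (q⁻¹ * ∏ j ∈ univ.erase i, (μ i - q⁻¹ ^ 2 * μ j) / (μ i - μ j)))
    (ht : ∀ n : ℕ, t n = ∑ i, (q⁻¹ ^ 2 * μ i) ^ n *
      (q * ∏ j ∈ univ.erase i, (μ i - q ^ 2 * μ j) / (μ i - μ j))) :
    ∀ n : ℕ, 1 ≤ n →
      p n = t n + ω * ∑ k ∈ Icc 1 (n - 1), p (n - k) * t k := by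
  have hqq : q * q⁻¹ = 1 := mul_inv_cancel₀ hq
  have hω0 : ω ≠ 0 := by
    have h : q ^ 2 - 1 = ω * q := by linear_combination -q * hω + hqq
    exact left_ne_zero_of_mul (h ▸ sub_ne_zero.mpr hq2)
  have hc : q⁻¹ ^ 2 ≠ 0 := pow_ne_zero 2 (inv_ne_zero hq)
  have hc_inv : (q⁻¹ ^ 2)⁻¹ = q ^ 2 := by rw [inv_pow, inv_inv]
  have hp_coeff : ∀ n, ∑ i, μ i ^ (n + 1) * ((1 - q⁻¹ ^ 2) * dilationWeight univ (q⁻¹ ^ 2) μ i) =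
      ω * p (n + 1) := fun n => by
    rw [hp, mul_sum, show 1 - q⁻¹ ^ 2 = ω * q⁻¹ by linear_combination -q⁻¹ * hω - hqq]
    exact sum_congr rfl fun i _ => by rw [dilationWeight]; ring
  have ht_coeff : ∀ n, ∑ i, (q⁻¹ ^ 2 * μ i) ^ (n + 1) *
      ((1 - q ^ 2) * dilationWeight univ (q ^ 2) (fun j => q⁻¹ ^ 2 * μ j) i) =
      -(ω * t (n + 1)) := fun n => by
    rw [ht, mul_sum, ← sum_neg_distrib,
      show 1 - q ^ 2 = -(ω * q) by linear_combination q * hω - hqq]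
    exact sum_congr rfl fun i _ => by rw [dilationWeight_const_mul _ _ _ _ hc, dilationWeight]; ring
  have h := dilationSeries_mul_dilationSeries_inv univ hc μ
  rw [hc_inv, dilationSeries_eq hμ.injOn,
    dilationSeries_eq (v := fun j => q⁻¹ ^ 2 * μ j) ((mul_right_injective₀ hc).comp hμ).injOn] at h
  simp only [hp_coeff, ht_coeff] at h
  exact eq_add_mul_sum_Icc_of_mul_eq_one hω0 h

/-- the spectral power sums satisfy
`pₙ(μ) = tₙ(μ) + ω Σ_{k=1}^{n−1} p_{n−k}(μ) t_k(μ)` for all `n ≥ 1`. -/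
theorem stmt_8 (q : ℂ) (hq : q ≠ 0) (hq2 : q ^ 2 ≠ 1) (ω : ℂ) (hω : ω = q - q⁻¹)
    (m : ℕ) (hm : 1 ≤ m) (μ : Fin m → ℂ) (hμ : Function.Injective μ)
    (p t : ℕ → ℂ)
    (hp : ∀ n : ℕ, p n = ∑ i, μ i ^ n *
      (q⁻¹ * ∏ j ∈ univ.erase i, (μ i - q⁻¹ ^ 2 * μ j) / (μ i - μ j)))
    (ht : ∀ n : ℕ, t n = ∑ i, (q⁻¹ ^ 2 * μ i) ^ n *
      (q * ∏ j ∈ univ.erase i, (μ i - q ^ 2 * μ j) / (μ i - μ j))) :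
    ∀ n : ℕ, 1 ≤ n →
      p n = t n + ω * ∑ k ∈ Icc 1 (n - 1), p (n - k) * t k :=
  stmt_8_general q hq hq2 ω hω m μ hμ p t hp ht
end

section
/- Let q ∈ ℂ with q ≠ 0 and q² ≠ 1, set ω = q − q⁻¹, let m ≥ 1, let μ₁, …, μ_m ∈ ℂ, and fix 1 ≤ k ≤ m. For any tuple ν = (ν₁, …, ν_m) define P(X; ν) := ω⁻¹ · (∏_{i=1}^{m} (1 − q⁻² ν_i X) · (∏_{i=1}^{m} (1 − ν_i X))⁻¹ − 1) ∈ ℂ[[X]], and let S_k(X) := q⁻² μ_k X · ((1 − q⁻² μ_k X)⁻¹)² ∈ ℂ[[X]]. Let μ′ be the tuple obtained from μ by replacing μ_k with q⁻² μ_k. Then in ℂ[[X]]: P(X; μ′) + ω S_k(X) = P(X; μ) · (1 − ω² S_k(X)). -/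
/-!
Write `F(ν) = ∏ (1 - q⁻²ν_i X) / ∏ (1 - ν_i X)`, so that `P(X; ν) = ω⁻¹ (F(ν) - 1)`. The claimed
identity is then equivalent to `F(μ') = F(μ) · (1 - ω² S_k)`. Only the `k`-th factors of the two
ratios differ, and with `a = q⁻²μ_k` the quotient of these factors is
`(1 - q²aX)(1 - q⁻²aX) / (1 - aX)²`, which is `1 - ω² S_k` because
`(1 - q²aX)(1 - q⁻²aX) = (1 - aX)² - ω² aX`.
-/

open Finset PowerSeries

variable {K : Type*} [Field K]

theorem PowerSeries.inv_one_sub_C_mul_X_mul_self (a : K) :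
    (1 - C a * X)⁻¹ * (1 - C a * X) = 1 :=
  PowerSeries.inv_mul_cancel _ (by simp)

theorem Fintype.prod_apply_update {ι α M : Type*} [Fintype ι] [DecidableEq ι] [CommMonoid M]
    (f : α → M) (ν : ι → α) (k : ι) (b : α) :
    ∏ i, f (Function.update ν k b i) = f b * ∏ i ∈ univ.erase k, f (ν i) := by
  rw [← mul_prod_erase univ _ (mem_univ k), Function.update_self]
  refine congrArg _ (Finset.prod_congr rfl fun i hi ↦ ?_)
  rw [Function.update_of_ne (ne_of_mem_erase hi)]

theorem one_sub_C_sub_inv_sq_mul_eq (q t : K) (hq : q ≠ 0) :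
    1 - C ((q - q⁻¹) ^ 2) * (C t * X * ((1 - C t * X)⁻¹) ^ 2)
      = (1 - C (q ^ 2 * t) * X) * (1 - C (q⁻¹ ^ 2 * t) * X) * ((1 - C t * X)⁻¹) ^ 2 := by
  have hqq : C q * C q⁻¹ = 1 := by rw [← map_mul, mul_inv_cancel₀ hq, map_one]
  have quadratic : (1 - C (q ^ 2 * t) * X) * (1 - C (q⁻¹ ^ 2 * t) * X)
      = (1 - C t * X) ^ 2 - C ((q - q⁻¹) ^ 2) * (C t * X) := by
    simp only [map_mul, map_pow, map_sub]
    linear_combination (-2 * C t * X + (C q * C q⁻¹ + 1) * C t ^ 2 * X ^ 2) * hqq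
  rw [quadratic]
  linear_combination (-(1 + (1 - C t * X) * (1 - C t * X)⁻¹)) *
    PowerSeries.inv_one_sub_C_mul_X_mul_self t

theorem C_inv_mul_sub_one_add_C_mul (c : K) {F F' S : K⟦X⟧} (h : F' = F * (1 - C (c ^ 2) * S)) :
    C c⁻¹ * (F' - 1) + C c * S = C c⁻¹ * (F - 1) * (1 - C (c ^ 2) * S) := by
  have hc : C c⁻¹ * C c * C c = C c := by rw [← map_mul, ← map_mul, inv_mul_mul_self]
  rw [map_pow] at h ⊢
  linear_combination C c⁻¹ * h - S * hc

noncomputable def shiftedProdRatio {ι : Type*} [Fintype ι] (q : K) (ν : ι → K) : K⟦X⟧ :=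
  (∏ i, (1 - C (q⁻¹ ^ 2 * ν i) * X)) * (∏ i, (1 - C (ν i) * X))⁻¹

theorem shiftedProdRatio_update {ι : Type*} [Fintype ι] [DecidableEq ι] (q : K) (hq : q ≠ 0)
    (μ : ι → K) (k : ι) :
    shiftedProdRatio q (Function.update μ k (q⁻¹ ^ 2 * μ k))
      = shiftedProdRatio q μ * (1 - C ((q - q⁻¹) ^ 2) *
          (C (q⁻¹ ^ 2 * μ k) * X * ((1 - C (q⁻¹ ^ 2 * μ k) * X)⁻¹) ^ 2)) := by
  obtain ⟨a, hμk⟩ : ∃ a, μ k = q ^ 2 * a := ⟨q⁻¹ ^ 2 * μ k, by field_simp⟩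
  have ha : q⁻¹ ^ 2 * μ k = a := by rw [hμk]; field_simp
  unfold shiftedProdRatio
  rw [Fintype.prod_apply_update (fun t ↦ 1 - C (q⁻¹ ^ 2 * t) * X),
    Fintype.prod_apply_update (fun t ↦ 1 - C t * X), ← mul_prod_erase univ _ (mem_univ k),
    ← mul_prod_erase univ (fun i ↦ 1 - C (μ i) * X) (mem_univ k), ha, hμk,
    one_sub_C_sub_inv_sq_mul_eq q a hq, PowerSeries.mul_inv_rev, PowerSeries.mul_inv_rev]
  set A₀ := ∏ i ∈ univ.erase k, (1 - C (q⁻¹ ^ 2 * μ i) * X)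
  set B₀ := ∏ i ∈ univ.erase k, (1 - C (μ i) * X)
  set x := 1 - C a * X
  set y := 1 - C (q ^ 2 * a) * X
  linear_combination (-(A₀ * B₀⁻¹ * (1 - C (q⁻¹ ^ 2 * a) * X) * x⁻¹)) *
    (y⁻¹ * y * PowerSeries.inv_one_sub_C_mul_X_mul_self a
      + PowerSeries.inv_one_sub_C_mul_X_mul_self (q ^ 2 * a))

theorem stmt_9_general (q : ℂ) (hq : q ≠ 0) (ω : ℂ) (hω : ω = q - q⁻¹)
    (m : ℕ) (μ : Fin m → ℂ) (k : Fin m)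
    (P : (Fin m → ℂ) → PowerSeries ℂ)
    (hP : ∀ ν : Fin m → ℂ, P ν = C ω⁻¹ *
      ((∏ i, (1 - C (q⁻¹ ^ 2 * ν i) * X)) * (∏ i, (1 - C (ν i) * X))⁻¹ - 1))
    (S : PowerSeries ℂ)
    (hS : S = C (q⁻¹ ^ 2 * μ k) * X * ((1 - C (q⁻¹ ^ 2 * μ k) * X)⁻¹) ^ 2) :
    P (Function.update μ k (q⁻¹ ^ 2 * μ k)) + C ω * S
      = P μ * (1 - C (ω ^ 2) * S) := by
  have hP' (ν : Fin m → ℂ) : P ν = C ω⁻¹ * (shiftedProdRatio q ν - 1) := hP ν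
  rw [hP', hP']
  apply C_inv_mul_sub_one_add_C_mul
  rw [hS, hω]
  exact shiftedProdRatio_update q hq μ k

/-- the shift identity `P(X; μ') + ωS_k(X) = P(X; μ)·(1 − ω²S_k(X))`, where
`μ'` replaces `μ_k` by `q⁻²μ_k` and `S_k(X) = z/(1−z)²` at `z = q⁻²μ_k X`. -/
theorem stmt_9 (q : ℂ) (hq : q ≠ 0) (hq2 : q ^ 2 ≠ 1) (ω : ℂ) (hω : ω = q - q⁻¹)
    (m : ℕ) (hm : 1 ≤ m) (μ : Fin m → ℂ) (k : Fin m)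
    (P : (Fin m → ℂ) → PowerSeries ℂ)
    (hP : ∀ ν : Fin m → ℂ, P ν = C ω⁻¹ *
      ((∏ i, (1 - C (q⁻¹ ^ 2 * ν i) * X)) * (∏ i, (1 - C (ν i) * X))⁻¹ - 1))
    (S : PowerSeries ℂ)
    (hS : S = C (q⁻¹ ^ 2 * μ k) * X * ((1 - C (q⁻¹ ^ 2 * μ k) * X)⁻¹) ^ 2) :
    P (Function.update μ k (q⁻¹ ^ 2 * μ k)) + C ω * S
      = P μ * (1 - C (ω ^ 2) * S) :=
  stmt_9_general q hq ω hω m μ k P hP S hS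
end

section
/- Let q ∈ ℂ with q ≠ 0 and qᵏ ≠ 1 for every integer k ≥ 1, and let m ≥ 1. Set μ_i := q^{−2(m−i)} for 1 ≤ i ≤ m. Then the second-kind multiplicities satisfy d̃_1(μ) = q^m · m_q and d̃_i(μ) = 0 for every 2 ≤ i ≤ m, and consequently for every n ≥ 1: Σ_{i=1}^{m} (q⁻² μ_i)ⁿ d̃_i(μ) = q^{m(1−2n)} · m_q. -/
open Finset

/-!
The vacuum spectrum is geometric with ratio `q²`. Hence `μᵢ = q² μᵢ₋₁` kills the factor
`j = i - 1` of `d̃ᵢ` for `i ≥ 2`, while the factors of `d̃₁` telescope to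
`(1 - q^{2m}) / (1 - q²) = q^{m-1} m_q`; the power sum then reduces to its first term.
-/

theorem mul_prod_range_div₀ {G : Type*} [CommGroupWithZero G] (f : ℕ → G) {n : ℕ}
    (hf : ∀ k < n, f k ≠ 0) : f 0 * ∏ k ∈ range n, f (k + 1) / f k = f n := by
  induction n with
  | zero => simp
  | succ n ih =>
    rw [prod_range_succ, ← mul_assoc, ih fun k hk => hf k (by omega),
      mul_div_cancel₀ _ (hf n n.lt_succ_self)]

section SecondKind

variable {K : Type*} [Field K]

def secondKindMult {m : ℕ} (q : K) (μ : Fin m → K) (i : Fin m) : K :=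
  q * ∏ j ∈ univ.erase i, (μ i - q ^ 2 * μ j) / (μ i - μ j)

def qNumber (q : K) (a : ℤ) : K := (q ^ a - q ^ (-a)) / (q - q⁻¹)

theorem secondKindMult_eq_zero {m : ℕ} {q : K} {μ : Fin m → K} {i j : Fin m} (hji : j ≠ i)
    (h : μ i = q ^ 2 * μ j) : secondKindMult q μ i = 0 := by
  rw [secondKindMult, prod_eq_zero (mem_erase.2 ⟨hji, mem_univ j⟩) (by rw [h, sub_self, zero_div]),
    mul_zero]

theorem one_sub_sq_mul_secondKindMult_zero {M : ℕ} {q c : K} {μ : Fin (M + 1) → K}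
    (hc : c ≠ 0) (hμ : ∀ i, μ i = c * (q ^ 2) ^ (i : ℕ)) (hq : ∀ k < M, (q ^ 2) ^ (k + 1) ≠ 1) :
    (1 - q ^ 2) * secondKindMult q μ 0 = q * (1 - (q ^ 2) ^ (M + 1)) := by
  set f : ℕ → K := fun k => 1 - (q ^ 2) ^ (k + 1)
  have hfactor : ∀ k : Fin M,
      (μ 0 - q ^ 2 * μ k.succ) / (μ 0 - μ k.succ) = f (k + 1) / f k := by
    intro k
    rw [hμ, hμ, Fin.val_zero, Fin.val_succ, pow_zero, mul_one, show c - q ^ 2 * (c * (q ^ 2) ^ ((k : ℕ) + 1)) = c * f (k + 1) by simp only [f]; ring,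
      show c - c * (q ^ 2) ^ ((k : ℕ) + 1) = c * f k by simp only [f]; ring, mul_div_mul_left _ _ hc]
  have hf : ∀ k < M, f k ≠ 0 := fun k hk => sub_ne_zero.2 (hq k hk).symm
  rw [secondKindMult, ← compl_singleton, ← Fin.image_succ_univ,
    prod_image (Fin.succ_injective _).injOn, prod_congr rfl fun k _ => hfactor k,
    Fin.prod_univ_eq_prod_range (fun k => f (k + 1) / f k), mul_left_comm,
    show 1 - q ^ 2 = f 0 by simp [f], mul_prod_range_div₀ f hf]

theorem one_sub_sq_mul_pow_mul_qNumber {q : K} (hq : q ≠ 0) (hq2 : q ^ 2 ≠ 1) (m : ℕ) :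
    (1 - q ^ 2) * (q ^ m * qNumber q m) = q * (1 - (q ^ 2) ^ m) := by
  have hden : q - q⁻¹ ≠ 0 := by
    rw [sub_ne_zero]
    intro h
    exact hq2 (by field_simp at h; linear_combination h)
  rw [qNumber, zpow_neg, zpow_natCast]
  field_simp
  ring

end SecondKind

/-- for the "vacuum" spectrum `μᵢ = q^{−2(m−i)}` (1-based `i`; here `i`-th
entry of `Fin m` corresponds to `i+1`), the second-kind multiplicities satisfy
`d̃₁ = q^m·m_q`, `d̃ᵢ = 0` for `i ≥ 2`, and `Σᵢ (q⁻²μᵢ)ⁿ d̃ᵢ = q^{m(1−2n)}·m_q`. -/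
theorem stmt_11 (q : ℂ) (hq : q ≠ 0) (hqk : ∀ k : ℕ, 1 ≤ k → q ^ k ≠ 1)
    (m : ℕ) (hm : 1 ≤ m) (μ : Fin m → ℂ)
    (hμ : ∀ i : Fin m, μ i = q ^ (-(2 * ((m : ℤ) - ((i : ℕ) + 1)))))
    (d : Fin m → ℂ)
    (hd : ∀ i : Fin m, d i = q * ∏ j ∈ univ.erase i, (μ i - q ^ 2 * μ j) / (μ i - μ j))
    (mq : ℂ) (hmq : mq = (q ^ (m : ℤ) - q ^ (-(m : ℤ))) / (q - q⁻¹)) :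
    d ⟨0, by omega⟩ = q ^ (m : ℕ) * mq ∧
    (∀ i : Fin m, 1 ≤ (i : ℕ) → d i = 0) ∧
    (∀ n : ℕ, 1 ≤ n →
      ∑ i, (q⁻¹ ^ 2 * μ i) ^ n * d i = q ^ ((m : ℤ) * (1 - 2 * (n : ℤ))) * mq) := by
  obtain ⟨M, rfl⟩ : ∃ M, m = M + 1 := ⟨m - 1, by omega⟩
  obtain rfl : d = secondKindMult q μ := funext hd
  replace hmq : mq = qNumber q (M + 1 : ℕ) := hmq
  have hgeom : ∀ i : Fin (M + 1), μ i = q ^ (-(2 * M : ℤ)) * (q ^ 2) ^ (i : ℕ) := by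
    intro i
    rw [hμ, ← pow_mul, ← zpow_natCast, ← zpow_add₀ hq]
    congr 1
    push_cast
    ring
  have hq2 : q ^ 2 ≠ 1 := hqk 2 (by norm_num)
  have hd0 : secondKindMult q μ 0 = q ^ (M + 1) * mq := by
    refine mul_left_cancel₀ (sub_ne_zero.2 hq2.symm) ?_
    rw [one_sub_sq_mul_secondKindMult_zero (zpow_ne_zero _ hq) hgeom
        fun k _ => by rw [← pow_mul]; exact hqk _ (by omega),
      hmq, one_sub_sq_mul_pow_mul_qNumber hq hq2]
  have hvanish : ∀ i : Fin (M + 1), 1 ≤ (i : ℕ) → secondKindMult q μ i = 0 := by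
    intro i hi
    refine secondKindMult_eq_zero (j := ⟨i - 1, by omega⟩) (Fin.ne_of_val_ne (by simp; omega)) ?_
    rw [hgeom, hgeom, mul_left_comm, ← pow_succ']
    congr 3
    simp only
    omega
  refine ⟨hd0, hvanish, fun n _ => ?_⟩
  have hbase : q⁻¹ ^ 2 * μ 0 = q ^ (-(2 * ((M : ℤ) + 1))) := by
    rw [hgeom, Fin.val_zero, pow_zero, mul_one, inv_pow, ← zpow_natCast q 2, ← zpow_neg,
      ← zpow_add₀ hq]
    congr 1
    ring
  rw [Fintype.sum_eq_single 0 fun i hi => by rw [hvanish i (Fin.pos_iff_ne_zero.2 hi), mul_zero],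
    hbase, hd0, ← zpow_natCast _ n, ← zpow_mul, ← zpow_natCast q (M + 1), ← mul_assoc,
    ← zpow_add₀ hq]
  congr 2
  push_cast
  ring
end

section
/- Let q ∈ ℂ with q ≠ 0 and q² ≠ 1, set ω = q − q⁻¹, let m ≥ 1, let μ₁, …, μ_m ∈ ℂ be pairwise distinct, and fix 1 ≤ i₀ ≤ m. Let μ′ be the tuple obtained from μ by replacing μ_{i₀} with q² μ_{i₀}, and assume the entries of μ′ are also pairwise distinct. Define t_n(ν) = Σ_{i=1}^{m} (q⁻² ν_i)ⁿ d̃_i(ν). Then for every n ≥ 1: t_n(μ) = t_n(μ′) − ω · n · μ_{i₀}ⁿ + ω² Σ_{s=1}^{n−1} s · μ_{i₀}^s · t_{n−s}(μ). -/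
/-!
Write `c = q²` and `y = q⁻² μ`, so that `tₙ(μ) = q Pₙ(y)` with `Pₙ(y) = Σᵢ yᵢⁿ Dᵢ(y)` and
`Dᵢ(y) = ∏_{j ≠ i} (yᵢ - c yⱼ) / (yᵢ - yⱼ)`. Lagrange interpolation of `∏ⱼ (w - c yⱼ)` at the
nodes `yⱼ` is the partial fraction expansion
`∏ⱼ (1 - c yⱼ X) / (1 - yⱼ X) = 1 + (1 - c) Σ_{n ≥ 1} Pₙ(y) Xⁿ`.
Replacing `b = y_{i₀}` by `c b` multiplies this product by
`(1 - c² b X)(1 - b X) / (1 - c b X)² = 1 - (c - 1)² b X / (1 - c b X)²`,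
and comparing coefficients of `Xⁿ` gives the recursion.
-/

open Finset

theorem prod_one_sub_mul_eq_pow_mul_prod_inv_sub {K ι : Type*} [Field K] (s : Finset ι)
    (b : ι → K) {x : K} (hx : x ≠ 0) :
    ∏ j ∈ s, (1 - b j * x) = x ^ #s * ∏ j ∈ s, (x⁻¹ - b j) := by
  rw [← prod_const, ← prod_mul_distrib]
  refine prod_congr rfl fun j _ => ?_
  rw [mul_sub, mul_inv_cancel₀ hx, mul_comm x]

section PowerSeries

open PowerSeries

variable {R : Type*} [CommRing R]

theorem mk_pow_mul_one_sub_C_mul_X (a : R) :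
    (PowerSeries.mk fun n => a ^ n) * (1 - C a * X) = 1 := by
  simpa [rescale_mk, mul_comm] using
    congrArg (rescale a) (mk_add_choose_mul_one_sub_pow_eq_one R (d := 0))

theorem mk_succ_mul_pow_mul_one_sub_C_mul_X_sq (a : R) :
    (PowerSeries.mk fun n => (n + 1 : R) * a ^ n) * (1 - C a * X) ^ 2 = 1 := by
  simpa [rescale_mk, add_comm, mul_comm] using
    congrArg (rescale a) (mk_add_choose_mul_one_sub_pow_eq_one R (d := 1))

theorem one_sub_C_mul_X_ne_zero [Nontrivial R] (b : R) : (1 - C b * X : R⟦X⟧) ≠ 0 := by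
  intro h
  simpa using congrArg constantCoeff h

theorem coeff_succ_of_mul_one_sub_C_mul_X_sq {e e' : R⟦X⟧} {a κ : R}
    (h : e' * (1 - C a * X) ^ 2 = e * ((1 - C a * X) ^ 2 - C κ * X)) (n : ℕ) :
    coeff (n + 1) e' =
      coeff (n + 1) e - κ * ∑ j ∈ range (n + 1), (j + 1) * a ^ j * coeff (n - j) e := by
  set S : R⟦X⟧ := PowerSeries.mk fun j => (j + 1 : R) * a ^ j
  have hS : S * (1 - C a * X) ^ 2 = 1 := mk_succ_mul_pow_mul_one_sub_C_mul_X_sq a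
  have he' : e' = e - C κ * X * (S * e) := by
    linear_combination S * h - (e' - e) * hS
  rw [he', map_sub, mul_assoc, coeff_C_mul, coeff_succ_X_mul, coeff_mul,
    Nat.sum_antidiagonal_eq_sum_range_succ (fun i j => coeff i S * coeff j e)]
  simp [S]

end PowerSeries

namespace SecondKind

variable {K ι : Type*} [Field K] [Fintype ι] [DecidableEq ι]

def weight (c : K) (y : ι → K) (i : ι) : K :=
  ∏ j ∈ univ.erase i, (y i - c * y j) / (y i - y j)

def powerSum (c : K) (y : ι → K) (n : ℕ) : K :=
  ∑ i, y i ^ n * weight c y i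

theorem weight_const_mul (c : K) (y : ι → K) {r : K} (hr : r ≠ 0) (i : ι) :
    weight c (fun j => r * y j) i = weight c y i := by
  refine prod_congr rfl fun j _ => ?_
  rw [mul_left_comm, ← mul_sub, ← mul_sub, mul_div_mul_left _ _ hr]

theorem sum_pow_mul_mul_prod_eq_mul_powerSum {q : K} (hq : q ≠ 0) (ν : ι → K) (n : ℕ) :
    ∑ i, (q⁻¹ ^ 2 * ν i) ^ n * (q * ∏ j ∈ univ.erase i, (ν i - q ^ 2 * ν j) / (ν i - ν j)) =
      q * powerSum (q ^ 2) (fun j => q⁻¹ ^ 2 * ν j) n := by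
  rw [powerSum, mul_sum]
  refine sum_congr rfl fun i _ => ?_
  rw [weight_const_mul _ _ (pow_ne_zero 2 (inv_ne_zero hq)), weight]
  ring

section Polynomial

open Polynomial

theorem prod_sub_mul_eq_prod_sub_add_sum {y : ι → K} (hy : Function.Injective y) (c w : K) :
    ∏ j, (w - c * y j) =
      ∏ j, (w - y j) + ∑ i, (1 - c) * y i * weight c y i * ∏ j ∈ univ.erase i, (w - y j) := by
  set f := Lagrange.nodal univ (fun j => c * y j) - Lagrange.nodal univ y
  have hdeg : f.degree < #(univ : Finset ι) := by
    rw [← Lagrange.degree_nodal (v := fun j => c * y j)]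
    exact degree_sub_lt_left (by rw [Lagrange.degree_nodal, Lagrange.degree_nodal])
      Lagrange.nodal_ne_zero
      (by rw [Lagrange.nodal_monic.leadingCoeff, Lagrange.nodal_monic.leadingCoeff])
  have hf := congrArg (eval w) (Lagrange.eq_interpolate (Set.injOn_of_injective hy) hdeg)
  simp only [f, eval_sub, Lagrange.eval_nodal, Lagrange.interpolate_apply, eval_finsetSum,
    eval_mul, eval_C, Lagrange.basis, Lagrange.basisDivisor, eval_prod, eval_X,
    Lagrange.eval_nodal_at_node (mem_univ _), sub_zero] at hf
  rw [← sub_eq_iff_eq_add', hf]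
  refine sum_congr rfl fun i _ => ?_
  rw [← mul_prod_erase _ _ (mem_univ i), weight]
  simp only [div_eq_mul_inv, prod_mul_distrib]
  ring

/-- The reversal `w = X⁻¹` of `prod_sub_mul_eq_prod_sub_add_sum`, checked at every `X ≠ 0`. -/
theorem prod_one_sub_C_mul_X_eq_add_sum [Infinite K] {y : ι → K} (hy : Function.Injective y)
    (c : K) :
    ∏ j, (1 - C (c * y j) * X) = ∏ j, (1 - C (y j) * X) +
      ∑ i, C ((1 - c) * y i * weight c y i) * X * ∏ j ∈ univ.erase i, (1 - C (y j) * X) := by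
  refine eq_of_infinite_eval_eq _ _
    ((Set.finite_singleton 0).infinite_compl.mono fun x hx => ?_)
  have hx : x ≠ 0 := hx
  have hcard (i : ι) : x * x ^ #(univ.erase i) = x ^ #(univ : Finset ι) := by
    rw [← pow_succ', card_erase_add_one (mem_univ i)]
  simp only [Set.mem_ofPred_eq, eval_prod, eval_add, eval_finsetSum, eval_mul, eval_sub,
    eval_one, eval_C, eval_X, prod_one_sub_mul_eq_pow_mul_prod_inv_sub _ _ hx,
    prod_sub_mul_eq_prod_sub_add_sum hy c x⁻¹, mul_add, mul_sum]
  congr 1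
  refine sum_congr rfl fun i _ => ?_
  rw [← hcard i]
  ring

end Polynomial

section PowerSeries

open PowerSeries

noncomputable def genSeries (c : K) (y : ι → K) : K⟦X⟧ :=
  1 + C (1 - c) * X * PowerSeries.mk fun n => powerSum c y (n + 1)

theorem coeff_genSeries_zero (c : K) (y : ι → K) : coeff 0 (genSeries c y) = 1 := by
  simp [genSeries]

theorem coeff_genSeries_succ (c : K) (y : ι → K) (n : ℕ) :
    coeff (n + 1) (genSeries c y) = (1 - c) * powerSum c y (n + 1) := by
  rw [genSeries, map_add, mul_assoc, coeff_C_mul, coeff_succ_X_mul, coeff_mk, coeff_one,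
    if_neg n.succ_ne_zero, zero_add]

theorem mk_powerSum_succ_mul_prod (c : K) (y : ι → K) :
    (PowerSeries.mk fun n => powerSum c y (n + 1)) * ∏ j, (1 - C (y j) * X) =
      ∑ i, C (y i * weight c y i) * ∏ j ∈ univ.erase i, (1 - C (y j) * X) := by
  have hmk : (PowerSeries.mk fun n => powerSum c y (n + 1)) =
      ∑ i, C (y i * weight c y i) * PowerSeries.mk fun n => y i ^ n := by
    ext n
    simp only [powerSum, coeff_mk, map_sum, coeff_C_mul, pow_succ]
    exact sum_congr rfl fun i _ => by ring
  rw [hmk, sum_mul]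
  refine sum_congr rfl fun i _ => ?_
  rw [← mul_prod_erase _ _ (mem_univ i), mul_assoc, ← mul_assoc (PowerSeries.mk _),
    mk_pow_mul_one_sub_C_mul_X, one_mul]

theorem genSeries_mul_prod [Infinite K] {y : ι → K} (hy : Function.Injective y) (c : K) :
    genSeries c y * ∏ j, (1 - C (y j) * X) = ∏ j, (1 - C (c * y j) * X) := by
  have hpoly := congrArg Polynomial.coeToPowerSeries.ringHom
    (prod_one_sub_C_mul_X_eq_add_sum hy c)
  simp only [map_prod, map_add, map_sum, map_mul, map_sub, map_one,
    Polynomial.coeToPowerSeries.ringHom_apply, Polynomial.coe_C, Polynomial.coe_X] at hpoly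
  rw [genSeries, add_mul, one_mul, mul_assoc, mk_powerSum_succ_mul_prod]
  simp only [map_mul, map_sub, map_one, hpoly, mul_sum]
  congr 1
  refine sum_congr rfl fun i _ => ?_
  ring

theorem genSeries_update_mul [Infinite K] {y : ι → K} (c : K) (i₀ : ι)
    (hy : Function.Injective y) (hy' : Function.Injective (Function.update y i₀ (c * y i₀))) :
    genSeries c (Function.update y i₀ (c * y i₀)) * (1 - C (c * y i₀) * X) ^ 2 =
      genSeries c y * ((1 - C (c * y i₀) * X) ^ 2 - C ((c - 1) ^ 2 * y i₀) * X) := by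
  have h := genSeries_mul_prod hy c
  have h' := genSeries_mul_prod hy' c
  have hR : ∏ j ∈ univ.erase i₀, (1 - C (Function.update y i₀ (c * y i₀) j) * X) =
      ∏ j ∈ univ.erase i₀, (1 - C (y j) * X) :=
    prod_congr rfl fun j hj => by rw [Function.update_of_ne (ne_of_mem_erase hj)]
  have hRc : ∏ j ∈ univ.erase i₀, (1 - C (c * Function.update y i₀ (c * y i₀) j) * X) =
      ∏ j ∈ univ.erase i₀, (1 - C (c * y j) * X) :=
    prod_congr rfl fun j hj => by rw [Function.update_of_ne (ne_of_mem_erase hj)]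
  have hne : ∏ j, (1 - C (y j) * X) ≠ 0 :=
    prod_ne_zero_iff.mpr fun j _ => one_sub_C_mul_X_ne_zero _
  simp only [← mul_prod_erase _ _ (mem_univ i₀), Function.update_self, hR, hRc] at h h' hne
  set R := ∏ j ∈ univ.erase i₀, (1 - C (y j) * X)
  set Rc := ∏ j ∈ univ.erase i₀, (1 - C (c * y j) * X)
  refine mul_right_cancel₀ hne ?_
  simp only [map_mul, map_pow, map_sub, map_one] at h h' ⊢
  linear_combination (1 - C c * C (y i₀) * X) * (1 - C (y i₀) * X) * h' -
    (1 - C c * (C c * C (y i₀)) * X) * (1 - C (y i₀) * X) * h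

end PowerSeries

theorem powerSum_update [Infinite K] {y : ι → K} {c : K} (hc0 : c ≠ 0) (hc1 : c ≠ 1) (i₀ : ι)
    (hy : Function.Injective y) (hy' : Function.Injective (Function.update y i₀ (c * y i₀)))
    {n : ℕ} (hn : 1 ≤ n) :
    powerSum c y n = powerSum c (Function.update y i₀ (c * y i₀)) n
      - (c - 1) / c * n * (c * y i₀) ^ n
      + (c - 1) ^ 2 / c * ∑ s ∈ Icc 1 (n - 1), s * (c * y i₀) ^ s * powerSum c y (n - s) := by
  obtain ⟨N, rfl⟩ := Nat.exists_eq_add_of_le' hn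
  have h := coeff_succ_of_mul_one_sub_C_mul_X_sq (genSeries_update_mul c i₀ hy hy') N
  rw [sum_range_succ, Nat.sub_self, coeff_genSeries_zero, coeff_genSeries_succ,
    coeff_genSeries_succ] at h
  have hsum : ∑ j ∈ range N, (j + 1) * (c * y i₀) ^ j * PowerSeries.coeff (N - j) (genSeries c y) =
      (1 - c) * ∑ j ∈ range N, (j + 1) * (c * y i₀) ^ j * powerSum c y (N - j) := by
    rw [mul_sum]
    refine sum_congr rfl fun j hj => ?_
    obtain ⟨k, hk⟩ := Nat.exists_eq_add_of_lt (mem_range.mp hj)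
    rw [show N - j = k + 1 by omega, coeff_genSeries_succ]
    ring
  have hP' : powerSum c (Function.update y i₀ (c * y i₀)) (N + 1) = powerSum c y (N + 1)
      - (c - 1) ^ 2 * y i₀ * ∑ j ∈ range N, (j + 1) * (c * y i₀) ^ j * powerSum c y (N - j)
      + (c - 1) * y i₀ * (N + 1) * (c * y i₀) ^ N := by
    refine mul_left_cancel₀ (sub_ne_zero.mpr hc1.symm) ?_
    rw [hsum] at h
    linear_combination h
  have hIcc : ∑ s ∈ Icc 1 (N + 1 - 1), (s : K) * (c * y i₀) ^ s * powerSum c y (N + 1 - s) =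
      c * y i₀ * ∑ j ∈ range N, (j + 1) * (c * y i₀) ^ j * powerSum c y (N - j) := by
    rw [Nat.add_sub_cancel, ← Ico_add_one_right_eq_Icc, sum_Ico_eq_sum_range, mul_sum]
    refine sum_congr (by simp) fun j _ => ?_
    rw [add_comm 1 j, Nat.add_sub_add_right]
    push_cast
    ring
  rw [hIcc, hP']
  push_cast
  field_simp
  ring

end SecondKind

theorem stmt_12_general (q : ℂ) (hq : q ≠ 0) (hq2 : q ^ 2 ≠ 1) (ω : ℂ) (hω : ω = q - q⁻¹)
    (m : ℕ) (μ : Fin m → ℂ) (hμ : Function.Injective μ)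
    (i₀ : Fin m) (μ' : Fin m → ℂ)
    (hμ' : μ' = Function.update μ i₀ (q ^ 2 * μ i₀))
    (hμ'inj : Function.Injective μ')
    (t : ℕ → (Fin m → ℂ) → ℂ)
    (ht : ∀ (n : ℕ) (ν : Fin m → ℂ), t n ν = ∑ i, (q⁻¹ ^ 2 * ν i) ^ n *
      (q * ∏ j ∈ univ.erase i, (ν i - q ^ 2 * ν j) / (ν i - ν j))) :
    ∀ n : ℕ, 1 ≤ n →
      t n μ = t n μ' - ω * (n : ℂ) * μ i₀ ^ n
        + ω ^ 2 * ∑ s ∈ Icc 1 (n - 1), (s : ℂ) * μ i₀ ^ s * t (n - s) μ := by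
  intro n hn
  have hr : q⁻¹ ^ 2 ≠ 0 := pow_ne_zero 2 (inv_ne_zero hq)
  have ht' (k : ℕ) (ν : Fin m → ℂ) :
      t k ν = q * SecondKind.powerSum (q ^ 2) (fun j => q⁻¹ ^ 2 * ν j) k :=
    (ht k ν).trans (SecondKind.sum_pow_mul_mul_prod_eq_mul_powerSum hq ν k)
  set y : Fin m → ℂ := fun j => q⁻¹ ^ 2 * μ j
  have hya : q ^ 2 * y i₀ = μ i₀ := by
    simp only [y]
    field_simp
  have hy' : (fun j => q⁻¹ ^ 2 * μ' j) = Function.update y i₀ (q ^ 2 * y i₀) := by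
    funext j
    rcases eq_or_ne j i₀ with rfl | hj
    · rw [hμ', Function.update_self, Function.update_self, mul_left_comm]
    · rw [hμ', Function.update_of_ne hj, Function.update_of_ne hj]
  have hyinj : Function.Injective y := fun a b h => hμ (mul_left_cancel₀ hr h)
  have hy'inj : Function.Injective (Function.update y i₀ (q ^ 2 * y i₀)) :=
    hy' ▸ fun a b h => hμ'inj (mul_left_cancel₀ hr h)
  have hsum : ∑ s ∈ Icc 1 (n - 1), (s : ℂ) * μ i₀ ^ s * t (n - s) μ =
      q * ∑ s ∈ Icc 1 (n - 1), (s : ℂ) * μ i₀ ^ s * SecondKind.powerSum (q ^ 2) y (n - s) := by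
    rw [mul_sum]
    exact sum_congr rfl fun s _ => by rw [ht']; ring
  rw [hsum, ht', ht', hy',
    SecondKind.powerSum_update (pow_ne_zero 2 hq) hq2 i₀ hyinj hy'inj hn, hya, hω]
  field_simp

/-- recursion for the second-kind power sums under the shift
`μ_{i₀} ↦ q²μ_{i₀}`:
`tₙ(μ) = tₙ(μ′) − ωnμ_{i₀}ⁿ + ω² Σ_{s=1}^{n−1} s μ_{i₀}^s t_{n−s}(μ)`. -/
theorem stmt_12 (q : ℂ) (hq : q ≠ 0) (hq2 : q ^ 2 ≠ 1) (ω : ℂ) (hω : ω = q - q⁻¹)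
    (m : ℕ) (hm : 1 ≤ m) (μ : Fin m → ℂ) (hμ : Function.Injective μ)
    (i₀ : Fin m) (μ' : Fin m → ℂ)
    (hμ' : μ' = Function.update μ i₀ (q ^ 2 * μ i₀))
    (hμ'inj : Function.Injective μ')
    (t : ℕ → (Fin m → ℂ) → ℂ)
    (ht : ∀ (n : ℕ) (ν : Fin m → ℂ), t n ν = ∑ i, (q⁻¹ ^ 2 * ν i) ^ n *
      (q * ∏ j ∈ univ.erase i, (ν i - q ^ 2 * ν j) / (ν i - ν j))) :
    ∀ n : ℕ, 1 ≤ n →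
      t n μ = t n μ' - ω * (n : ℂ) * μ i₀ ^ n
        + ω ^ 2 * ∑ s ∈ Icc 1 (n - 1), (s : ℂ) * μ i₀ ^ s * t (n - s) μ :=
  stmt_12_general q hq hq2 ω hω m μ hμ i₀ μ' hμ' hμ'inj t ht
end

section
/- Let q ∈ ℂ with q ≠ 0 and q² ≠ 1, set ω = q − q⁻¹, let m ≥ 1, let μ₁, …, μ_m ∈ ℂ be pairwise distinct, and fix 1 ≤ i₀ ≤ m. Let μ″ be the tuple obtained from μ by replacing μ_{i₀} with q⁻² μ_{i₀}, and assume the entries of μ″ are also pairwise distinct. Define p_n(ν) = Σ_{i=1}^{m} ν_iⁿ d_i(ν). Then for every n ≥ 1: p_n(μ) = p_n(μ″) + ω · n · (q⁻² μ_{i₀})ⁿ + ω² Σ_{s=1}^{n−1} s · (q⁻² μ_{i₀})^s · p_{n−s}(μ). -/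
/-!
Put `c = q⁻²`, `x = μ_{i₀}`, `w_i(ν) = ∏_{j ≠ i} (ν_i - c ν_j) / (ν_i - ν_j)` (so `d_i = q⁻¹ w_i`)
and `P_n(ν) = ∑ ν_iⁿ w_i(ν)`. For `i ≠ i₀` the weights `w_i(μ)` and `w_i(μ″)` differ only in
their `j = i₀` factor, whence `w_i(μ) (μ_i - x)(μ_i - c²x) = w_i(μ″) (μ_i - cx)²`, while the
`i₀` terms vanish on both sides. Multiplying by `μ_iⁿ` and summing, the second differences of
`P(μ)` for the characteristic polynomial `(t - x)(t - c²x)` equal those of `P(μ″)` for `(t - cx)²`.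
The partial fraction expansion of `∏ (z - c ν_j) / ∏ (z - ν_j)` gives `P_0(ν) = 1 + c + ⋯ + c^{m-1}`
and `P_1(ν) = ∑ ν_i` for all distinct `ν`, and the claimed closed form is the solution of this
difference equation with these initial values.
-/

open Finset Polynomial Lagrange

section Weights

variable {K : Type*} [Field K] {ι : Type*} [Fintype ι] [DecidableEq ι]

noncomputable def qWeight (c : K) (ν : ι → K) (i : ι) : K :=
  ∏ j ∈ univ.erase i, (ν i - c * ν j) / (ν i - ν j)

lemma qWeight_mul_prod_sub {ν : ι → K} (hν : Function.Injective ν) (c : K) (i : ι) :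
    qWeight c ν i * ∏ j ∈ univ.erase i, (ν i - ν j) = ∏ j ∈ univ.erase i, (ν i - c * ν j) := by
  rw [qWeight, ← prod_mul_distrib]
  exact prod_congr rfl fun j hj =>
    div_mul_cancel₀ _ (sub_ne_zero.mpr (hν.ne (ne_of_mem_erase hj).symm))

/-- Partial fractions for `∏ (z - c ν_j) / ∏ (z - ν_j)`, multiplied out. -/
lemma nodal_mul_sub_nodal {ν : ι → K} (hν : Function.Injective ν) (c : K) :
    nodal univ (fun j => c * ν j) - nodal univ ν
      = ∑ i, ((1 - c) * ν i * qWeight c ν i) • nodal (univ.erase i) ν := by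
  refine eq_of_degree_sub_lt_of_eval_index_eq univ hν.injOn ?_ fun k _ => ?_
  · rw [← mem_degreeLT]
    refine Submodule.sub_mem _ ?_ (Submodule.sum_mem _ fun i _ => ?_) <;> rw [mem_degreeLT]
    · have h := degree_sub_lt_left (p := nodal univ fun j => c * ν j) (q := nodal univ ν)
        (by rw [degree_nodal, degree_nodal]) nodal_ne_zero
        (by rw [nodal_monic.leadingCoeff, nodal_monic.leadingCoeff])
      rwa [degree_nodal] at h
    · refine (degree_smul_le _ _).trans_lt ?_
      rw [degree_nodal, card_erase_of_mem (mem_univ i), card_univ]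
      exact_mod_cast Nat.sub_lt (Fintype.card_pos_iff.mpr ⟨i⟩) one_pos
  · rw [eval_sub, eval_nodal_at_node (mem_univ k), eval_finsetSum,
      sum_eq_single k (fun i _ hik => by
        rw [eval_smul, eval_nodal_at_node (mem_erase.mpr ⟨hik.symm, mem_univ k⟩), smul_zero])
        (by simp), eval_smul, smul_eq_mul, eval_nodal (s := univ.erase k), mul_assoc,
      qWeight_mul_prod_sub hν, eval_nodal, ← mul_prod_erase univ _ (mem_univ k)]
    ring

lemma sum_mul_qWeight {ν : ι → K} (hν : Function.Injective ν) {c : K} (hc : c ≠ 1) :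
    ∑ i, ν i * qWeight c ν i = ∑ i, ν i := by
  rcases isEmpty_or_nonempty ι with hι | ⟨⟨i₀⟩⟩
  · simp
  have hcard : 0 < #(univ : Finset ι) := card_pos.mpr ⟨i₀, mem_univ _⟩
  have h := congrArg (coeff · (Fintype.card ι - 1)) (nodal_mul_sub_nodal hν c)
  simp only [coeff_sub, finsetSum_coeff, coeff_smul, smul_eq_mul] at h
  rw [nodal_eq, nodal_eq, ← card_univ, prod_X_sub_C_coeff_card_pred _ _ hcard,
    prod_X_sub_C_coeff_card_pred _ _ hcard] at h
  have hmonic : ∀ i, (nodal (univ.erase i) ν).coeff (#(univ : Finset ι) - 1) = 1 := fun i => by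
    rw [← card_erase_of_mem (mem_univ i), ← natDegree_nodal (v := ν)]
    exact nodal_monic.coeff_natDegree
  simp only [hmonic, mul_one, mul_assoc, ← mul_sum] at h
  have hc' : 1 - c ≠ 0 := sub_ne_zero.mpr hc.symm
  exact mul_left_cancel₀ hc' (by linear_combination -h)

lemma sum_qWeight_of_ne_zero {ν : ι → K} (hν : Function.Injective ν) {c : K} (hc : c ≠ 1)
    (h0 : ∀ i, ν i ≠ 0) : ∑ i, qWeight c ν i = ∑ k ∈ range (Fintype.card ι), c ^ k := by
  have h := congrArg (eval 0) (nodal_mul_sub_nodal hν c)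
  simp only [eval_sub, eval_finsetSum, eval_smul, eval_nodal, smul_eq_mul] at h
  set E := ∏ j, (0 - ν j)
  have hE : E ≠ 0 := prod_ne_zero_iff.mpr fun j _ => sub_ne_zero.mpr (h0 j).symm
  have hscale : ∏ j, (0 - c * ν j) = c ^ Fintype.card ι * E := by
    rw [← card_univ, ← prod_const, ← prod_mul_distrib]
    exact prod_congr rfl fun j _ => by ring
  have hterm : ∀ i, (1 - c) * ν i * qWeight c ν i * ∏ j ∈ univ.erase i, (0 - ν j)
      = -((1 - c) * E) * qWeight c ν i := fun i => by
    rw [show E = _ from (mul_prod_erase univ (fun j => 0 - ν j) (mem_univ i)).symm]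
    ring
  rw [hscale, sum_congr rfl fun i _ => hterm i, ← mul_sum] at h
  have hc' : 1 - c ≠ 0 := sub_ne_zero.mpr hc.symm
  refine mul_left_cancel₀ (mul_ne_zero hc' hE) ?_
  linear_combination h - E * mul_neg_geom_sum c (Fintype.card ι)

lemma sum_qWeight [Infinite K] {ν : ι → K} (hν : Function.Injective ν) {c : K} (hc : c ≠ 1) :
    ∑ i, qWeight c ν i = ∑ k ∈ range (Fintype.card ι), c ^ k := by
  -- Shifting all nodes by `s` keeps the denominators, so the shifted sum is a polynomial in `s`;
  -- it is constant as soon as no shifted node is `0`.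
  set Q : K[X] := ∑ i, ∏ j ∈ univ.erase i,
    C (ν i - ν j)⁻¹ * (C (ν i - c * ν j) + C (1 - c) * X)
  have hQ : ∀ s, Q.eval s = ∑ i, qWeight c (fun j => ν j + s) i := fun s => by
    simp only [Q, qWeight, eval_finsetSum, eval_prod, eval_mul, eval_add, eval_C, eval_X]
    refine sum_congr rfl fun i _ => prod_congr rfl fun j _ => ?_
    rw [add_sub_add_right_eq_sub, div_eq_inv_mul]
    ring
  have hconst : Q = C (∑ k ∈ range (Fintype.card ι), c ^ k) := by
    refine eq_of_infinite_eval_eq _ _ ((Set.finite_range fun j => -ν j).infinite_compl.mono ?_)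
    intro s hs
    simp only [Set.mem_compl_iff, Set.mem_range, not_exists] at hs
    rw [Set.mem_ofPred_eq, hQ, eval_C]
    exact sum_qWeight_of_ne_zero ((add_left_injective s).comp hν) hc
      fun j h => hs j (neg_eq_of_add_eq_zero_right h)
  simpa using (hQ 0).symm.trans (by rw [hconst, eval_C])

noncomputable def qPowerSum (c : K) (ν : ι → K) (n : ℕ) : K :=
  ∑ i, ν i ^ n * qWeight c ν i

lemma qPowerSum_zero [Infinite K] {ν : ι → K} (hν : Function.Injective ν) {c : K} (hc : c ≠ 1) :
    qPowerSum c ν 0 = ∑ k ∈ range (Fintype.card ι), c ^ k := by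
  simp only [qPowerSum, pow_zero, one_mul, sum_qWeight hν hc]

lemma qPowerSum_one {ν : ι → K} (hν : Function.Injective ν) {c : K} (hc : c ≠ 1) :
    qPowerSum c ν 1 = ∑ i, ν i := by
  simp only [qPowerSum, pow_one, sum_mul_qWeight hν hc]

lemma qPowerSum_add_two_sub (c : K) (ν : ι → K) (x y : K) (n : ℕ) :
    qPowerSum c ν (n + 2) - (x + y) * qPowerSum c ν (n + 1) + x * y * qPowerSum c ν n
      = ∑ i, ν i ^ n * qWeight c ν i * ((ν i - x) * (ν i - y)) := by
  simp only [qPowerSum, mul_sum, ← sum_sub_distrib, ← sum_add_distrib]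
  exact sum_congr rfl fun i _ => by ring

lemma qWeight_update_mul {ν : ι → K} {i₀ i : ι} (hi : i ≠ i₀) {c t : K}
    (h₀ : ν i ≠ ν i₀) (ht : ν i ≠ t) :
    qWeight c ν i * ((ν i - ν i₀) * (ν i - c * t))
      = qWeight c (Function.update ν i₀ t) i * ((ν i - t) * (ν i - c * ν i₀)) := by
  have hmem : i₀ ∈ univ.erase i := mem_erase.mpr ⟨hi.symm, mem_univ i₀⟩
  have hrest : ∏ j ∈ (univ.erase i).erase i₀,
      (Function.update ν i₀ t i - c * Function.update ν i₀ t j)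
        / (Function.update ν i₀ t i - Function.update ν i₀ t j)
      = ∏ j ∈ (univ.erase i).erase i₀, (ν i - c * ν j) / (ν i - ν j) :=
    prod_congr rfl fun j hj => by
      rw [Function.update_of_ne hi, Function.update_of_ne (ne_of_mem_erase hj)]
  rw [qWeight, qWeight, ← mul_prod_erase _ _ hmem, ← mul_prod_erase _ _ hmem, hrest,
    Function.update_self, Function.update_of_ne hi]
  field_simp [sub_ne_zero.mpr h₀, sub_ne_zero.mpr ht]

lemma qPowerSum_update_recurrence {ν : ι → K} (hν : Function.Injective ν) {i₀ : ι} {c t : K}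
    (hν' : Function.Injective (Function.update ν i₀ t)) (n : ℕ) :
    qPowerSum c ν (n + 2) - (ν i₀ + c * t) * qPowerSum c ν (n + 1)
        + ν i₀ * (c * t) * qPowerSum c ν n
      = qPowerSum c (Function.update ν i₀ t) (n + 2)
        - (t + c * ν i₀) * qPowerSum c (Function.update ν i₀ t) (n + 1)
        + t * (c * ν i₀) * qPowerSum c (Function.update ν i₀ t) n := by
  rw [qPowerSum_add_two_sub, qPowerSum_add_two_sub]
  refine sum_congr rfl fun i _ => ?_
  rcases eq_or_ne i i₀ with rfl | hi
  · simp
  · have ht : ν i ≠ t := by simpa [Function.update_of_ne hi] using hν'.ne hi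
    rw [Function.update_of_ne hi, mul_assoc, mul_assoc, qWeight_update_mul hi (hν.ne hi) ht]

end Weights

section Recurrence

variable {R : Type*} [CommRing R]

def weightedConvolution (a : R) (u : ℕ → R) (n : ℕ) : R :=
  ∑ j ∈ range n, (j : R) * a ^ j * u (n - j)

lemma weightedConvolution_add_two (a : R) (u : ℕ → R) (n : ℕ) :
    weightedConvolution a u (n + 2)
      = 2 * a * weightedConvolution a u (n + 1) - a ^ 2 * weightedConvolution a u n
        + a * u (n + 1) := by
  set S : ℕ → R := fun n => ∑ j ∈ range n, a ^ j * u (n - j)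
  have hS : ∀ n, S (n + 1) = u (n + 1) + a * S n := fun n => by
    simp only [S, sum_range_succ', mul_sum, Nat.add_sub_add_right, pow_succ, pow_zero, one_mul,
      Nat.sub_zero]
    exact (add_comm _ _).trans (congrArg _ (sum_congr rfl fun j _ => by ring))
  have hW : ∀ n, weightedConvolution a u (n + 1) = a * (weightedConvolution a u n + S n) :=
    fun n => by
      simp only [weightedConvolution, S, sum_range_succ', mul_sum, ← sum_add_distrib,
        Nat.add_sub_add_right, pow_succ, Nat.cast_add, Nat.cast_one, Nat.cast_zero, zero_mul,
        add_zero]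
      exact sum_congr rfl fun j _ => by ring
  linear_combination hW (n + 1) + a * hS n - a * hW n

lemma weightedConvolution_eq_sum_Icc (a : R) (u : ℕ → R) (n : ℕ) :
    weightedConvolution a u n = ∑ s ∈ Icc 1 (n - 1), (s : R) * a ^ s * u (n - s) := by
  cases n with
  | zero => simp [weightedConvolution]
  | succ n =>
    rw [weightedConvolution, range_eq_Ico, sum_eq_sum_Ico_succ_bot n.succ_pos,
      ← Ico_add_one_right_eq_Icc, Nat.add_sub_cancel]
    simp

theorem eq_add_weightedConvolution {u v : ℕ → R} {a ω : R} (h0 : u 0 = v 0)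
    (h1 : u 1 = v 1 + ω * a)
    (hrec : ∀ n, u (n + 2) - 2 * a * u (n + 1) + a ^ 2 * u n
      = v (n + 2) - 2 * a * v (n + 1) + a ^ 2 * v n + ω ^ 2 * a * u (n + 1)) (n : ℕ) :
    u n = v n + ω * n * a ^ n + ω ^ 2 * weightedConvolution a u n := by
  induction n using Nat.twoStepInduction with
  | zero => simp [weightedConvolution, h0]
  | one => simp [weightedConvolution, h1]
  | more n ih₀ ih₁ =>
    push_cast at ih₀ ih₁ ⊢
    linear_combination hrec n + 2 * a * ih₁ - a ^ 2 * ih₀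
      - ω ^ 2 * weightedConvolution_add_two a u n

end Recurrence

theorem stmt_13_general (q : ℂ) (hq : q ≠ 0) (hq2 : q ^ 2 ≠ 1) (ω : ℂ) (hω : ω = q - q⁻¹)
    (m : ℕ) (μ : Fin m → ℂ) (hμ : Function.Injective μ)
    (i₀ : Fin m) (μ'' : Fin m → ℂ)
    (hμ'' : μ'' = Function.update μ i₀ (q⁻¹ ^ 2 * μ i₀))
    (hμ''inj : Function.Injective μ'')
    (p : ℕ → (Fin m → ℂ) → ℂ)
    (hp : ∀ (n : ℕ) (ν : Fin m → ℂ), p n ν = ∑ i, ν i ^ n *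
      (q⁻¹ * ∏ j ∈ univ.erase i, (ν i - q⁻¹ ^ 2 * ν j) / (ν i - ν j))) :
    ∀ n : ℕ, 1 ≤ n →
      p n μ = p n μ'' + ω * (n : ℂ) * (q⁻¹ ^ 2 * μ i₀) ^ n
        + ω ^ 2 * ∑ s ∈ Icc 1 (n - 1), (s : ℂ) * (q⁻¹ ^ 2 * μ i₀) ^ s * p (n - s) μ := by
  intro n _
  subst hω hμ''
  have hc : q⁻¹ ^ 2 ≠ 1 := by rwa [inv_pow, inv_ne_one]
  have hqq : q * q⁻¹ = 1 := mul_inv_cancel₀ hq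
  have hp' : ∀ n ν, p n ν = q⁻¹ * qPowerSum (q⁻¹ ^ 2) ν n := fun n ν => by
    rw [hp, qPowerSum, mul_sum]
    exact sum_congr rfl fun i _ => by rw [qWeight]; ring
  rw [← weightedConvolution_eq_sum_Icc _ fun k => p k μ]
  refine eq_add_weightedConvolution (u := fun k => p k μ) (v := fun k => p k _) ?_ ?_
    (fun k => ?_) n
  · simp only [hp', qPowerSum_zero hμ hc, qPowerSum_zero hμ''inj hc]
  · simp only [hp', qPowerSum_one hμ hc, qPowerSum_one hμ''inj hc,
      sum_update_of_mem (mem_univ i₀), sum_eq_add_sum_sdiff_singleton_of_mem (mem_univ i₀) μ]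
    linear_combination (-q⁻¹ * μ i₀) * hqq
  · have h := qPowerSum_update_recurrence hμ hμ''inj k (c := q⁻¹ ^ 2)
    simp only [hp']
    -- `x + c²x = (ω² + 2) c x` for `c = q⁻²`, since `c q² = 1`
    linear_combination q⁻¹ * h
      + q⁻¹ * μ i₀ * (2 * q⁻¹ ^ 2 - 1 - q * q⁻¹) * qPowerSum (q⁻¹ ^ 2) μ (k + 1) * hqq

/-- recursion for the first-kind power sums under the shift
`μ_{i₀} ↦ q⁻²μ_{i₀}`:
`pₙ(μ) = pₙ(μ″) + ωn(q⁻²μ_{i₀})ⁿ + ω² Σ_{s=1}^{n−1} s (q⁻²μ_{i₀})^s p_{n−s}(μ)`. -/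
theorem stmt_13 (q : ℂ) (hq : q ≠ 0) (hq2 : q ^ 2 ≠ 1) (ω : ℂ) (hω : ω = q - q⁻¹)
    (m : ℕ) (hm : 1 ≤ m) (μ : Fin m → ℂ) (hμ : Function.Injective μ)
    (i₀ : Fin m) (μ'' : Fin m → ℂ)
    (hμ'' : μ'' = Function.update μ i₀ (q⁻¹ ^ 2 * μ i₀))
    (hμ''inj : Function.Injective μ'')
    (p : ℕ → (Fin m → ℂ) → ℂ)
    (hp : ∀ (n : ℕ) (ν : Fin m → ℂ), p n ν = ∑ i, ν i ^ n *
      (q⁻¹ * ∏ j ∈ univ.erase i, (ν i - q⁻¹ ^ 2 * ν j) / (ν i - ν j))) :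
    ∀ n : ℕ, 1 ≤ n →
      p n μ = p n μ'' + ω * (n : ℂ) * (q⁻¹ ^ 2 * μ i₀) ^ n
        + ω ^ 2 * ∑ s ∈ Icc 1 (n - 1), (s : ℂ) * (q⁻¹ ^ 2 * μ i₀) ^ s * p (n - s) μ :=
  stmt_13_general q hq hq2 ω hω m μ hμ i₀ μ'' hμ'' hμ''inj p hp
end

section
/- Let A be an associative unital ℂ-algebra, ω ∈ ℂ, and let r₁, …, r_K ∈ A satisfy the braid relations r_i r_{i+1} r_i = r_{i+1} r_i r_{i+1} (for 1 ≤ i ≤ K−1), r_i r_j = r_j r_i whenever |i−j| ≥ 2, and the Hecke condition r_i² = 1 + ω r_i. Define the Jucys–Murphy elements by j₁ = 1 and j_p = r_{p−1} j_{p−1} r_{p−1} for 2 ≤ p ≤ K+1. Then for every 1 ≤ k ≤ K and every n ≥ 1: r_k · j_{k+1}ⁿ = j_kⁿ · r_k + ω Σ_{s=1}^{n} j_{k+1}^s · j_k^{n−s}. -/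
/-!
The Hecke relation turns `j_{k+1} = r_k j_k r_k` into the exchange rule
`r_k j_{k+1} = j_k r_k + ω j_{k+1}`; once `j_k` and `j_{k+1}` commute, pushing `r_k` through
`j_{k+1}ⁿ` one factor at a time produces the stated sum. That `j_k` and `j_{k+1}` commute
follows by induction on `k` from the braid relation, using that `r_i` commutes with `j_m`
for `m < i`.
-/

open Finset

theorem Commute.conj_braid {M : Type*} [Monoid M] {a b x : M}
    (hab : a * b * a = b * a * b) (hbx : Commute b x) (hx : Commute x (a * x * a)) :
    Commute (a * x * a) (b * (a * x * a) * b) := by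
  have hab' : ∀ t : M, a * (b * (a * t)) = b * (a * (b * t)) := fun t => by
    simpa only [mul_assoc] using congrArg (· * t) hab
  have hbx' : ∀ t : M, x * (b * t) = b * (x * t) := fun t => by
    rw [← mul_assoc, ← hbx.eq, mul_assoc]
  have hx' : ∀ t : M, x * (a * (x * (a * t))) = a * (x * (a * (x * t))) := fun t => by
    simpa only [mul_assoc] using congrArg (· * t) hx.eq
  have hba : b * (a * b) = a * (b * a) := by simpa only [mul_assoc] using hab.symm
  unfold Commute SemiconjBy
  simp only [mul_assoc]
  rw [hab' (x * (a * b)), ← hbx' (a * b), hbx' (a * (x * (b * (a * b)))), hba,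
    hx' (b * a), hab' (x * a), ← hbx' a, hbx' (a * (x * (b * a))),
    ← hab' (x * (a * (x * (b * a))))]

theorem mul_pow_eq_pow_mul_add_smul_sum {R A : Type*} [CommSemiring R] [Semiring A]
    [Algebra R A] {ω : R} {r x y : A} (hxy : Commute x y) (h : r * y = x * r + ω • y) (n : ℕ) :
    r * y ^ n = x ^ n * r + ω • ∑ s ∈ Icc 1 n, y ^ s * x ^ (n - s) := by
  induction n with
  | zero => simp
  | succ n ih =>
    have hsum : x * ∑ s ∈ Icc 1 n, y ^ s * x ^ (n - s)
        = ∑ s ∈ Icc 1 n, y ^ s * x ^ (n + 1 - s) := by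
      rw [mul_sum]
      refine sum_congr rfl fun s hs => ?_
      rw [← mul_assoc, (hxy.pow_right s).eq, mul_assoc, ← pow_succ',
        Nat.sub_add_comm (mem_Icc.mp hs).2]
    calc r * y ^ (n + 1) = (r * y) * y ^ n := by rw [pow_succ', mul_assoc]
      _ = x * (r * y ^ n) + ω • y ^ (n + 1) := by
        rw [h, add_mul, smul_mul_assoc, mul_assoc, ← pow_succ']
      _ = x ^ (n + 1) * r + ω • ∑ s ∈ Icc 1 (n + 1), y ^ s * x ^ (n + 1 - s) := by
        rw [ih, mul_add, mul_smul_comm, ← mul_assoc, ← pow_succ', hsum,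
          sum_Icc_succ_top (by omega), Nat.sub_self, pow_zero, mul_one, smul_add, add_assoc]

section JucysMurphy

variable {A : Type*} {K : ℕ} {r J : ℕ → A}

theorem jucysMurphy_succ [Mul A]
    (hJ : ∀ p : ℕ, 2 ≤ p → p ≤ K + 1 → J p = r (p - 1) * J (p - 1) * r (p - 1))
    {k : ℕ} (hk : 1 ≤ k) (hkK : k ≤ K) : J (k + 1) = r k * J k * r k := by
  simpa using hJ (k + 1) (by omega) (by omega)

variable [Monoid A]

theorem commute_generator_jucysMurphy_of_lt
    (hcomm : ∀ i j : ℕ, 1 ≤ i → 1 ≤ j → i ≤ K → j ≤ K → i + 2 ≤ j → r i * r j = r j * r i)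
    (hJ1 : J 1 = 1)
    (hJ : ∀ p : ℕ, 2 ≤ p → p ≤ K + 1 → J p = r (p - 1) * J (p - 1) * r (p - 1))
    {m i : ℕ} (hm : 1 ≤ m) (hmi : m < i) (hiK : i ≤ K) : Commute (r i) (J m) := by
  induction m, hm using Nat.le_induction generalizing i with
  | base => rw [hJ1]; exact Commute.one_right _
  | succ m hm ih =>
    have hri : Commute (r i) (r m) := (hcomm m i hm (by omega) (by omega) hiK (by omega)).symm
    rw [jucysMurphy_succ hJ hm (by omega)]
    exact (hri.mul_right (ih (by omega) hiK)).mul_right hri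

theorem commute_jucysMurphy_succ
    (hbraid : ∀ i : ℕ, 1 ≤ i → i + 1 ≤ K → r i * r (i + 1) * r i = r (i + 1) * r i * r (i + 1))
    (hcomm : ∀ i j : ℕ, 1 ≤ i → 1 ≤ j → i ≤ K → j ≤ K → i + 2 ≤ j → r i * r j = r j * r i)
    (hJ1 : J 1 = 1)
    (hJ : ∀ p : ℕ, 2 ≤ p → p ≤ K + 1 → J p = r (p - 1) * J (p - 1) * r (p - 1))
    {k : ℕ} (hk : 1 ≤ k) (hkK : k ≤ K) : Commute (J k) (J (k + 1)) := by
  induction k, hk using Nat.le_induction with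
  | base => rw [hJ1]; exact Commute.one_left _
  | succ k hk ih =>
    have hJk := jucysMurphy_succ hJ hk (by omega)
    rw [hJk, jucysMurphy_succ hJ (by omega : 1 ≤ k + 1) hkK, hJk]
    refine Commute.conj_braid (hbraid k hk hkK)
      (commute_generator_jucysMurphy_of_lt hcomm hJ1 hJ hk (by omega) hkK) ?_
    rw [← hJk]
    exact ih (by omega)

end JucysMurphy

theorem generator_mul_jucysMurphy_succ {R A : Type*} [CommSemiring R] [Semiring A]
    [Algebra R A] {K : ℕ} {ω : R} {r J : ℕ → A}
    (hhecke : ∀ i : ℕ, 1 ≤ i → i ≤ K → r i * r i = 1 + ω • r i)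
    (hJ : ∀ p : ℕ, 2 ≤ p → p ≤ K + 1 → J p = r (p - 1) * J (p - 1) * r (p - 1))
    {k : ℕ} (hk : 1 ≤ k) (hkK : k ≤ K) : r k * J (k + 1) = J k * r k + ω • J (k + 1) := by
  rw [jucysMurphy_succ hJ hk hkK]
  calc r k * (r k * J k * r k) = (r k * r k) * (J k * r k) := by simp only [mul_assoc]
    _ = J k * r k + ω • (r k * J k * r k) := by
      rw [hhecke k hk hkK, add_mul, one_mul, smul_mul_assoc, mul_assoc]

/-- in a ℂ-algebra with Hecke generators `r₁,…,r_K` and Jucys–Murphy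
elements `j₁ = 1`, `j_p = r_{p−1} j_{p−1} r_{p−1}`, one has
`r_k j_{k+1}ⁿ = j_kⁿ r_k + ω Σ_{s=1}^{n} j_{k+1}^s j_k^{n−s}`. -/
theorem stmt_14 (A : Type*) [Ring A] [Algebra ℂ A] (K : ℕ) (ω : ℂ) (r : ℕ → A)
    (hbraid : ∀ i : ℕ, 1 ≤ i → i + 1 ≤ K →
      r i * r (i + 1) * r i = r (i + 1) * r i * r (i + 1))
    (hcomm : ∀ i j : ℕ, 1 ≤ i → 1 ≤ j → i ≤ K → j ≤ K → i + 2 ≤ j →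
      r i * r j = r j * r i)
    (hhecke : ∀ i : ℕ, 1 ≤ i → i ≤ K → r i * r i = 1 + ω • r i)
    (J : ℕ → A) (hJ1 : J 1 = 1)
    (hJ : ∀ p : ℕ, 2 ≤ p → p ≤ K + 1 → J p = r (p - 1) * J (p - 1) * r (p - 1)) :
    ∀ k n : ℕ, 1 ≤ k → k ≤ K → 1 ≤ n →
      r k * J (k + 1) ^ n
        = J k ^ n * r k + ω • ∑ s ∈ Icc 1 n, J (k + 1) ^ s * J k ^ (n - s) := fun _ n hk hkK _ =>
  mul_pow_eq_pow_mul_add_smul_sum (commute_jucysMurphy_succ hbraid hcomm hJ1 hJ hk hkK)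
    (generator_mul_jucysMurphy_succ hhecke hJ hk hkK) n
end

section
/- Let A be an associative unital ℂ-algebra, ω ∈ ℂ, and let r₁, …, r_K ∈ A satisfy the braid relations r_i r_{i+1} r_i = r_{i+1} r_i r_{i+1} (for 1 ≤ i ≤ K−1), r_i r_j = r_j r_i whenever |i−j| ≥ 2, and the Hecke condition r_i² = 1 + ω r_i. For a fixed shift k ≥ 0 define the shifted Jucys–Murphy elements j₁^{↑k} = 1 and j_p^{↑k} = r_{k+p−1} ⋯ r_{k+2} · r_{k+1}² · r_{k+2} ⋯ r_{k+p−1} for p ≥ 2 (whenever the indices involved do not exceed K). Then the shifted Jucys–Murphy elements with the same shift k pairwise commute: j_p^{↑k} · j_r^{↑k} = j_r^{↑k} · j_p^{↑k} for all admissible p, r. -/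
open Finset

/-- Key abstract computation: if `b` commutes with `t`, `s,t` satisfy the braid
relation, and `b` commutes with `s*b*s`, then `s*b*s` commutes with `t*(s*b*s)*t`. -/
theorem jm_crux {A : Type*} [Ring A] (b s t : A)
    (hbt : b * t = t * b) (hbr : s * t * s = t * s * t)
    (hIH : b * (s * b * s) = s * b * s * b) :
    (s * b * s) * (t * (s * b * s) * t) = (t * (s * b * s) * t) * (s * b * s) := by
  have hbr' : ∀ x : A, s * (t * (s * x)) = t * (s * (t * x)) := fun x => by
    simpa [mul_assoc] using congrArg (· * x) hbr
  have hbt' : ∀ x : A, b * (t * x) = t * (b * x) := fun x => by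
    simpa [mul_assoc] using congrArg (· * x) hbt
  have hIH' : ∀ x : A, b * (s * (b * (s * x))) = s * (b * (s * (b * x))) := fun x => by
    simpa [mul_assoc] using congrArg (· * x) hIH
  have hbr0 : t * (s * t) = s * (t * s) := by
    simpa [mul_assoc] using hbr.symm
  simp only [mul_assoc]
  calc s * (b * (s * (t * (s * (b * (s * t))))))
      = s * (b * (t * (s * (t * (b * (s * t)))))) := by rw [hbr' (b * (s * t))]
    _ = s * (t * (b * (s * (t * (b * (s * t)))))) := by rw [hbt' (s * (t * (b * (s * t))))]
    _ = s * (t * (b * (s * (b * (t * (s * t)))))) := by rw [← hbt' (s * t)]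
    _ = s * (t * (b * (s * (b * (s * (t * s)))))) := by rw [hbr0]
    _ = s * (t * (s * (b * (s * (b * (t * s)))))) := by rw [hIH' (t * s)]
    _ = s * (t * (s * (b * (s * (t * (b * s)))))) := by rw [hbt' s]
    _ = t * (s * (t * (b * (s * (t * (b * s)))))) := by rw [hbr' (b * (s * (t * (b * s))))]
    _ = t * (s * (b * (t * (s * (t * (b * s)))))) := by rw [← hbt' (s * (t * (b * s)))]
    _ = t * (s * (b * (s * (t * (s * (b * s)))))) := by rw [← hbr' (b * s)]

/-- the shifted Jucys–Murphy elements
`j_p^{↑k} = r_{k+p−1} ⋯ r_{k+2} r_{k+1}² r_{k+2} ⋯ r_{k+p−1}` (and `j₁^{↑k} = 1`)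
with the same shift `k` pairwise commute, for all admissible indices. -/
theorem stmt_16 (A : Type*) [Ring A] [Algebra ℂ A] (K : ℕ) (ω : ℂ) (r : ℕ → A)
    (hbraid : ∀ i : ℕ, 1 ≤ i → i + 1 ≤ K →
      r i * r (i + 1) * r i = r (i + 1) * r i * r (i + 1))
    (hcomm : ∀ i j : ℕ, 1 ≤ i → 1 ≤ j → i ≤ K → j ≤ K → i + 2 ≤ j →
      r i * r j = r j * r i)
    (hhecke : ∀ i : ℕ, 1 ≤ i → i ≤ K → r i * r i = 1 + ω • r i)
    (k : ℕ) (J : ℕ → A) (hJ1 : J 1 = 1)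
    (hJ : ∀ p : ℕ, 2 ≤ p → k + p - 1 ≤ K →
      J p = ((List.range (p - 2)).map fun i => r (k + p - 1 - i)).prod
        * (r (k + 1) * r (k + 1))
        * ((List.range (p - 2)).map fun i => r (k + 2 + i)).prod) :
    ∀ p s : ℕ, 1 ≤ p → 1 ≤ s → k + p - 1 ≤ K → k + s - 1 ≤ K →
      J p * J s = J s * J p := by
  -- Step recursion: J (p+1) = r (k+p) * J p * r (k+p)
  have Jstep : ∀ p : ℕ, 1 ≤ p → k + p ≤ K → J (p + 1) = r (k + p) * J p * r (k + p) := by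
    intro p hp hK'
    rcases eq_or_lt_of_le hp with h1 | h2
    · -- p = 1
      have hp1 : p = 1 := h1.symm
      subst hp1
      have e := hJ 2 (by norm_num) (by omega)
      simp only [show (2:ℕ) - 2 = 0 from rfl, List.range_zero, List.map_nil,
        List.prod_nil, one_mul, mul_one] at e
      rw [e, hJ1, mul_one]
    · -- p ≥ 2
      have hp2 : 2 ≤ p := h2
      have e1 := hJ (p + 1) (by omega) (by omega)
      have e2 := hJ p (by omega) (by omega)
      have hd : ((List.range (p + 1 - 2)).map fun i => r (k + (p + 1) - 1 - i)).prod
          = r (k + p) * ((List.range (p - 2)).map fun i => r (k + p - 1 - i)).prod := by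
        rw [show p + 1 - 2 = (p - 2) + 1 by omega, List.range_succ_eq_map]
        simp only [List.map_cons, List.prod_cons, List.map_map]
        rw [show k + (p + 1) - 1 - 0 = k + p by omega]
        refine congrArg (r (k + p) * ·) (congrArg List.prod ?_)
        apply List.map_congr_left
        intro i _
        simp only [Function.comp_apply]
        congr 1
        omega
      have ha : ((List.range (p + 1 - 2)).map fun i => r (k + 2 + i)).prod
          = ((List.range (p - 2)).map fun i => r (k + 2 + i)).prod * r (k + p) := by
        rw [show p + 1 - 2 = (p - 2) + 1 by omega, List.range_succ]
        simp only [List.map_append, List.prod_append, List.map_cons, List.map_nil,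
          List.prod_cons, List.prod_nil, mul_one]
        congr 2
        omega
      rw [e1, hd, ha, e2]
      simp only [mul_assoc]
  -- r (k+m) commutes with J q when q + 1 ≤ m
  have rJ : ∀ m q : ℕ, 1 ≤ q → q + 1 ≤ m → k + m ≤ K →
      r (k + m) * J q = J q * r (k + m) := by
    intro m q hq hqm hK'
    rcases eq_or_lt_of_le hq with h1 | h2
    · have hq1 : q = 1 := h1.symm
      subst hq1
      rw [hJ1, mul_one, one_mul]
    · have hq2 : 2 ≤ q := h2
      have e := hJ q (by omega) (by omega)
      have hx : ∀ n : ℕ, k + 1 ≤ n → n ≤ k + q - 1 → Commute (r (k + m)) (r n) := by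
        intro n hn1 hn2
        exact (hcomm n (k + m) (by omega) (by omega) (by omega) hK' (by omega)).symm
      have c1 : Commute (r (k + m)) (((List.range (q - 2)).map fun i => r (k + q - 1 - i)).prod) := by
        apply Commute.list_prod_right
        intro x hxm
        obtain ⟨i, hi, rfl⟩ := List.mem_map.1 hxm
        have hi' := List.mem_range.1 hi
        exact hx _ (by omega) (by omega)
      have c2 : Commute (r (k + m)) (((List.range (q - 2)).map fun i => r (k + 2 + i)).prod) := by
        apply Commute.list_prod_right
        intro x hxm
        obtain ⟨i, hi, rfl⟩ := List.mem_map.1 hxm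
        have hi' := List.mem_range.1 hi
        exact hx _ (by omega) (by omega)
      have c3 : Commute (r (k + m)) (r (k + 1) * r (k + 1)) := by
        have := hx (k + 1) le_rfl (by omega)
        exact this.mul_right this
      rw [e]
      exact (((c1.mul_right c3).mul_right c2)).eq
  -- main lemma for p < s
  have key : ∀ s : ℕ, ∀ p : ℕ, 1 ≤ p → p < s → k + s - 1 ≤ K → J p * J s = J s * J p := by
    intro s
    induction s using Nat.strong_induction_on with
    | _ s IH =>
      intro p hp hps hKs
      rcases eq_or_lt_of_le hp with h1 | hp2
      · have hp1 : p = 1 := h1.symm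
        subst hp1
        rw [hJ1, one_mul, mul_one]
      · rcases Nat.lt_or_ge (p + 1) s with hlt | hge
        · -- s > p + 1
          have e := Jstep (s - 1) (by omega) (by omega)
          rw [show s - 1 + 1 = s by omega] at e
          have hc : Commute (J p) (r (k + (s - 1))) :=
            (rJ (s - 1) p hp (by omega) (by omega)).symm
          have hIHc : Commute (J p) (J (s - 1)) :=
            IH (s - 1) (by omega) p hp (by omega) (by omega)
          rw [e]
          exact ((hc.mul_right hIHc).mul_right hc).eq
        · -- s = p + 1
          have hs : s = p + 1 := by omega
          subst hs
          have eJp : J p = r (k + (p - 1)) * J (p - 1) * r (k + (p - 1)) := by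
            have h := Jstep (p - 1) (by omega) (by omega)
            rwa [show p - 1 + 1 = p by omega] at h
          have eJs : J (p + 1) = r (k + p) * J p * r (k + p) :=
            Jstep p (by omega) (by omega)
          have hbt : J (p - 1) * r (k + p) = r (k + p) * J (p - 1) :=
            (rJ p (p - 1) (by omega) (by omega) (by omega)).symm
          have hbr : r (k + (p - 1)) * r (k + p) * r (k + (p - 1))
              = r (k + p) * r (k + (p - 1)) * r (k + p) := by
            have h := hbraid (k + (p - 1)) (by omega) (by omega)
            rwa [show k + (p - 1) + 1 = k + p by omega] at h
          have hbIH : J (p - 1) * J p = J p * J (p - 1) :=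
            IH p (by omega) (p - 1) (by omega) (by omega) (by omega)
          rw [eJs, eJp]
          exact jm_crux (J (p - 1)) (r (k + (p - 1))) (r (k + p)) hbt hbr
            (by rw [← eJp]; exact hbIH)
  intro p s hp hs hKp hKs
  rcases lt_trichotomy p s with h | h | h
  · exact key s p hp h hKs
  · rw [h]
  · exact (key p s hs h hKp).symm
end
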